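/- arXiv:2407.16315 — 5 statements merged into one kernel-verified Lean document; each statement's English description precedes it below -/
import Mathlib

section
/- Let f ∈ ℤ[x,y,z] be a polynomial and let s ∈ ℂ with Re(s) > 1. Then the series D(s) = Σ_{q=1}^∞ q^{−s−4} Σ_{a mod q} Σ_{b ∈ (ℤ/qℤ)³} e_q(a·f(b)) (the sum over a running over all residues modulo q) converges absolutely and satisfies D(s) = F(s+1) · ζ(s+1), where ζ is the Riemann zeta function. -/
open Complex

/-- `e_q(a) = exp(2πia/q)` for an integer `a`. -/
noncomputable def eQ (q : ℕ) (a : ℤ) : ℂ :=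
  Complex.exp (2 * Real.pi * Complex.I * a / q)

/-- Evaluation of `f ∈ ℤ[x,y,z]` at a triple of naturals. -/
noncomputable def evalTriple (f : MvPolynomial (Fin 3) ℤ) (b : ℕ × ℕ × ℕ) : ℤ :=
  MvPolynomial.eval ![(b.1 : ℤ), (b.2.1 : ℤ), (b.2.2 : ℤ)] f

/-- The complete exponential sum `Σ_{a mod q} Σ_{b ∈ (ℤ/qℤ)³} e_q(a·f(b))`,
with `a` running over all residues mod `q`. -/
noncomputable def SqAll (f : MvPolynomial (Fin 3) ℤ) (q : ℕ) : ℂ :=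
  ∑ a ∈ Finset.range q,
    ∑ b ∈ (Finset.range q) ×ˢ (Finset.range q) ×ˢ (Finset.range q),
      eQ q (a * evalTriple f b)

/-- The restricted exponential sum `Σ_{a mod q, gcd(a,q)=1} Σ_{b ∈ (ℤ/qℤ)³} e_q(a·f(b))`. -/
noncomputable def Sq (f : MvPolynomial (Fin 3) ℤ) (q : ℕ) : ℂ :=
  ∑ a ∈ (Finset.range q).filter (fun a => Nat.gcd a q = 1),
    ∑ b ∈ (Finset.range q) ×ˢ (Finset.range q) ×ˢ (Finset.range q),
      eQ q (a * evalTriple f b)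


lemma norm_eQ (q : ℕ) (a : ℤ) : ‖eQ q a‖ = 1 := by
  unfold eQ
  have h : 2 * (Real.pi : ℂ) * Complex.I * a / q
      = ((2 * Real.pi * a / q : ℝ) : ℂ) * Complex.I := by push_cast; ring
  rw [h]
  exact Complex.norm_exp_ofReal_mul_I _

lemma eQ_add_mul {d : ℕ} (hd : d ≠ 0) (m k : ℤ) : eQ d (m + d * k) = eQ d m := by
  unfold eQ
  have hdc : (d : ℂ) ≠ 0 := Nat.cast_ne_zero.mpr hd
  have h : 2 * (Real.pi : ℂ) * Complex.I * ((m : ℤ) + d * k : ℤ) / d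
      = 2 * Real.pi * Complex.I * m / d + k * (2 * Real.pi * Complex.I) := by
    push_cast
    field_simp
  rw [h, Complex.exp_add, Complex.exp_int_mul_two_pi_mul_I, mul_one]

lemma eQ_congr {d : ℕ} (hd : d ≠ 0) {m m' : ℤ} (h : m ≡ m' [ZMOD (d : ℤ)]) :
    eQ d m = eQ d m' := by
  obtain ⟨k, hk⟩ := Int.ModEq.dvd h
  have : m' = m + d * k := by linarith
  rw [this, eQ_add_mul hd]

lemma eQ_mul_right {d m : ℕ} (hd : d ≠ 0) (hm : m ≠ 0) (x : ℤ) :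
    eQ (d * m) (x * m) = eQ d x := by
  unfold eQ
  have hdc : (d : ℂ) ≠ 0 := Nat.cast_ne_zero.mpr hd
  have hmc : (m : ℂ) ≠ 0 := Nat.cast_ne_zero.mpr hm
  congr 1
  push_cast
  field_simp

lemma eval_modEq (d : ℤ) (f : MvPolynomial (Fin 3) ℤ) (v w : Fin 3 → ℤ)
    (h : ∀ i, v i ≡ w i [ZMOD d]) :
    MvPolynomial.eval v f ≡ MvPolynomial.eval w f [ZMOD d] := by
  induction f using MvPolynomial.induction_on with
  | C a => simp
  | add p q hp hq => simpa using hp.add hq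
  | mul_X p i hp => simpa using hp.mul (h i)

lemma sum_range_mul_of_periodic (g : ℕ → ℂ) (d m : ℕ) (hg : ∀ x, g (x + d) = g x) :
    ∑ x ∈ Finset.range (d * m), g x = m * ∑ x ∈ Finset.range d, g x := by
  induction m with
  | zero => simp
  | succ m ih =>
    have hper : Function.Periodic g d := hg
    rw [Nat.mul_succ, Finset.sum_range_add, ih]
    have h2 : ∀ x ∈ Finset.range d, g (d * m + x) = g x := by
      intro x _
      have := (hper.nat_mul m) x
      simpa [Nat.cast_id, mul_comm, add_comm] using this
    rw [Finset.sum_congr rfl h2]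
    push_cast
    ring

lemma shift_modEq (d n : ℕ) : ((n + d : ℕ) : ℤ) ≡ (n : ℤ) [ZMOD (d : ℤ)] := by
  have h : (n : ℤ) + d ≡ n + 0 [ZMOD (d : ℤ)] :=
    Int.ModEq.add_left _ (Int.modEq_zero_iff_dvd.mpr dvd_rfl)
  push_cast
  simpa using h

lemma evalTriple_modEq (f : MvPolynomial (Fin 3) ℤ) (d : ℕ) (x x' y y' z z' : ℕ)
    (hx : (x : ℤ) ≡ (x' : ℤ) [ZMOD (d : ℤ)]) (hy : (y : ℤ) ≡ (y' : ℤ) [ZMOD (d : ℤ)])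
    (hz : (z : ℤ) ≡ (z' : ℤ) [ZMOD (d : ℤ)]) :
    evalTriple f (x, y, z) ≡ evalTriple f (x', y', z') [ZMOD (d : ℤ)] := by
  apply eval_modEq
  intro i
  fin_cases i <;> [exact hx; exact hy; exact hz]

set_option maxHeartbeats 1000000 in
lemma triple_fold (f : MvPolynomial (Fin 3) ℤ) (a : ℤ) (d m : ℕ) (hd : d ≠ 0) :
    ∑ b ∈ (Finset.range (d * m)) ×ˢ (Finset.range (d * m)) ×ˢ (Finset.range (d * m)),
        eQ d (a * evalTriple f b)
      = (m : ℂ) ^ 3 * ∑ b ∈ (Finset.range d) ×ˢ (Finset.range d) ×ˢ (Finset.range d),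
        eQ d (a * evalTriple f b) := by
  have hmod : ∀ x x' y y' z z' : ℕ, (x : ℤ) ≡ (x' : ℤ) [ZMOD (d : ℤ)] →
      (y : ℤ) ≡ (y' : ℤ) [ZMOD (d : ℤ)] → (z : ℤ) ≡ (z' : ℤ) [ZMOD (d : ℤ)] →
      eQ d (a * evalTriple f (x, y, z)) = eQ d (a * evalTriple f (x', y', z')) :=
    fun x x' y y' z z' hx hy hz =>
      eQ_congr hd (Int.ModEq.mul_left a (evalTriple_modEq f d x x' y y' z z' hx hy hz))
  simp only [Finset.sum_product]
  have h1 : ∀ x y, ∑ z ∈ Finset.range (d * m), eQ d (a * evalTriple f (x, y, z))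
      = (m : ℂ) * ∑ z ∈ Finset.range d, eQ d (a * evalTriple f (x, y, z)) := by
    intro x y
    exact sum_range_mul_of_periodic _ d m
      (fun z => hmod x x y y (z + d) z Int.ModEq.rfl Int.ModEq.rfl (shift_modEq d z))
  simp only [h1]
  have h2 : ∀ x, ∑ y ∈ Finset.range (d * m),
        ((m : ℂ) * ∑ z ∈ Finset.range d, eQ d (a * evalTriple f (x, y, z)))
      = (m : ℂ) * ∑ y ∈ Finset.range d,
        ((m : ℂ) * ∑ z ∈ Finset.range d, eQ d (a * evalTriple f (x, y, z))) := by
    intro x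
    refine sum_range_mul_of_periodic _ d m (fun y => ?_)
    exact congrArg (fun t => (m : ℂ) * t) (Finset.sum_congr rfl fun z _ =>
      hmod x x (y + d) y z z Int.ModEq.rfl (shift_modEq d y) Int.ModEq.rfl)
  simp only [h2]
  have h3 : ∀ x : ℕ,
      ((m : ℂ) * ∑ y ∈ Finset.range d, ((m : ℂ) * ∑ z ∈ Finset.range d,
        eQ d (a * evalTriple f (x + d, y, z))))
      = (m : ℂ) * ∑ y ∈ Finset.range d, ((m : ℂ) * ∑ z ∈ Finset.range d,
        eQ d (a * evalTriple f (x, y, z))) := by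
    intro x
    refine congrArg (fun t => (m : ℂ) * t) (Finset.sum_congr rfl fun y _ =>
      congrArg (fun t => (m : ℂ) * t) (Finset.sum_congr rfl fun z _ =>
        hmod (x + d) x y y z z (shift_modEq d x) Int.ModEq.rfl Int.ModEq.rfl))
  rw [sum_range_mul_of_periodic _ d m h3]
  simp only [Finset.mul_sum]
  refine Finset.sum_congr rfl fun x _ => Finset.sum_congr rfl fun y _ =>
    Finset.sum_congr rfl fun z _ => by ring

lemma summand_aux (f : MvPolynomial (Fin 3) ℤ) (d g aa : ℕ) (hd : d ≠ 0) (hg : g ≠ 0) :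
    ∑ b ∈ (Finset.range (d * g)) ×ˢ (Finset.range (d * g)) ×ˢ (Finset.range (d * g)),
        eQ (d * g) (↑(aa * g) * evalTriple f b)
      = ((g : ℕ) : ℂ) ^ 3 * ∑ b ∈ (Finset.range d) ×ˢ (Finset.range d) ×ˢ (Finset.range d),
        eQ d (↑aa * evalTriple f b) := by
  have h : ∀ b, eQ (d * g) (↑(aa * g) * evalTriple f b) = eQ d (↑aa * evalTriple f b) := by
    intro b
    have h2 : ((aa * g : ℕ) : ℤ) * evalTriple f b
        = ((aa : ℕ) : ℤ) * evalTriple f b * ((g : ℕ) : ℤ) := by push_cast; ring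
    rw [h2]
    exact eQ_mul_right hd hg _
  rw [Finset.sum_congr rfl fun b _ => h b]
  exact triple_fold f _ d g hd

set_option maxHeartbeats 2000000 in
lemma SqAll_eq (f : MvPolynomial (Fin 3) ℤ) (q : ℕ) (hq : q ≠ 0) :
    SqAll f q = ∑ d ∈ q.divisors, ((q / d : ℕ) : ℂ) ^ 3 * Sq f d := by
  have hq0 : 0 < q := Nat.pos_of_ne_zero hq
  rw [SqAll]
  simp only [Sq, Finset.mul_sum]
  conv_rhs => rw [Finset.sum_sigma']
  refine Finset.sum_nbij' (fun a => (⟨q / Nat.gcd a q, a / Nat.gcd a q⟩ : Σ _ : ℕ, ℕ))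
    (fun p => p.2 * (q / p.1)) ?_ ?_ ?_ ?_ ?_
  · -- membership forward
    intro a ha
    rw [Finset.mem_range] at ha
    have hg : 0 < Nat.gcd a q := Nat.gcd_pos_of_pos_right a hq0
    have hgd : Nat.gcd a q ∣ q := Nat.gcd_dvd_right a q
    refine Finset.mem_sigma.mpr ⟨Nat.mem_divisors.mpr ⟨Nat.div_dvd_of_dvd hgd, hq⟩, ?_⟩
    rw [Finset.mem_filter, Finset.mem_range]
    exact ⟨Nat.div_lt_div_of_lt_of_dvd hgd ha, Nat.coprime_div_gcd_div_gcd hg⟩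
  · -- membership backward
    rintro ⟨d, a'⟩ hp
    simp only [Finset.mem_sigma, Nat.mem_divisors, Finset.mem_filter,
      Finset.mem_range] at hp
    obtain ⟨⟨hdvd, -⟩, ha', -⟩ := hp
    have hqd : 0 < q / d := Nat.div_pos (Nat.le_of_dvd hq0 hdvd)
      (Nat.pos_of_dvd_of_pos hdvd hq0)
    rw [Finset.mem_range]
    calc a' * (q / d) < d * (q / d) := (Nat.mul_lt_mul_right hqd).mpr ha'
    _ = q := Nat.mul_div_cancel' hdvd
  · -- left inverse
    intro a ha
    have hgd : Nat.gcd a q ∣ q := Nat.gcd_dvd_right a q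
    show a / Nat.gcd a q * (q / (q / Nat.gcd a q)) = a
    rw [Nat.div_div_self hgd hq, Nat.div_mul_cancel (Nat.gcd_dvd_left a q)]
  · -- right inverse
    rintro ⟨d, a'⟩ hp
    simp only [Finset.mem_sigma, Nat.mem_divisors, Finset.mem_filter,
      Finset.mem_range] at hp
    obtain ⟨⟨hdvd, -⟩, ha', hcop⟩ := hp
    have hd0 : 0 < d := Nat.pos_of_dvd_of_pos hdvd hq0
    obtain ⟨e, rfl⟩ := hdvd
    have he0 : 0 < e := by
      rcases Nat.eq_zero_or_pos e with h | h
      · subst h; simp at hq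
      · exact h
    have hde : d * e / d = e := Nat.mul_div_cancel_left e hd0
    show (⟨d * e / Nat.gcd (a' * (d * e / d)) (d * e),
        a' * (d * e / d) / Nat.gcd (a' * (d * e / d)) (d * e)⟩ : Σ _ : ℕ, ℕ) = ⟨d, a'⟩
    rw [hde]
    have hgcd : Nat.gcd (a' * e) (d * e) = e := by
      rw [Nat.gcd_mul_right, hcop, one_mul]
    rw [hgcd, Nat.mul_div_cancel _ he0, Nat.mul_div_cancel _ he0]
  · -- summand equality
    intro a ha
    rw [Finset.mem_range] at ha
    have hg0 : 0 < Nat.gcd a q := Nat.gcd_pos_of_pos_right a hq0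
    have hgd : Nat.gcd a q ∣ q := Nat.gcd_dvd_right a q
    have hga : Nat.gcd a q ∣ a := Nat.gcd_dvd_left a q
    have hd0 : q / Nat.gcd a q ≠ 0 :=
      (Nat.div_pos (Nat.le_of_dvd hq0 hgd) hg0).ne'
    have hqe : q / Nat.gcd a q * Nat.gcd a q = q := Nat.div_mul_cancel hgd
    have hqq : q / (q / Nat.gcd a q) = Nat.gcd a q := Nat.div_div_self hgd hq
    show (∑ b ∈ (Finset.range q) ×ˢ (Finset.range q) ×ˢ (Finset.range q),
        eQ q (↑a * evalTriple f b))
      = ∑ b ∈ (Finset.range (q / Nat.gcd a q)) ×ˢ (Finset.range (q / Nat.gcd a q)) ×ˢ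
          (Finset.range (q / Nat.gcd a q)),
        ((q / (q / Nat.gcd a q) : ℕ) : ℂ) ^ 3
          * eQ (q / Nat.gcd a q) (↑(a / Nat.gcd a q) * evalTriple f b)
    rw [hqq]
    have key := summand_aux f (q / Nat.gcd a q) (Nat.gcd a q) (a / Nat.gcd a q) hd0 hg0.ne'
    rw [hqe, Nat.div_mul_cancel hga] at key
    exact key.trans (Finset.mul_sum _ _ _)

lemma norm_Sq_le (f : MvPolynomial (Fin 3) ℤ) (q : ℕ) : ‖Sq f q‖ ≤ (q : ℝ) ^ 4 := by
  rw [Sq]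
  calc ‖∑ a ∈ (Finset.range q).filter (fun a => Nat.gcd a q = 1),
      ∑ b ∈ (Finset.range q) ×ˢ (Finset.range q) ×ˢ (Finset.range q),
        eQ q (a * evalTriple f b)‖
      ≤ ∑ a ∈ (Finset.range q).filter (fun a => Nat.gcd a q = 1),
        ∑ b ∈ (Finset.range q) ×ˢ (Finset.range q) ×ˢ (Finset.range q),
          ‖eQ q (a * evalTriple f b)‖ :=
        (norm_sum_le _ _).trans (Finset.sum_le_sum fun a _ => norm_sum_le _ _)
    _ = ∑ a ∈ (Finset.range q).filter (fun a => Nat.gcd a q = 1),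
        ∑ _b ∈ (Finset.range q) ×ˢ (Finset.range q) ×ˢ (Finset.range q), (1 : ℝ) :=
        Finset.sum_congr rfl fun a _ => Finset.sum_congr rfl fun b _ => norm_eQ _ _
    _ ≤ (q : ℝ) ^ 4 := by
        simp only [Finset.sum_const, nsmul_eq_mul, mul_one]
        have h1 : ((Finset.range q).filter (fun a => Nat.gcd a q = 1)).card ≤ q := by
          simpa using Finset.card_filter_le (Finset.range q) _
        have h2 : (((Finset.range q) ×ˢ (Finset.range q) ×ˢ (Finset.range q)).card : ℝ)
            = (q : ℝ) ^ 3 := by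
          simp [Finset.card_product]; ring
        rw [h2]
        calc (((Finset.range q).filter (fun a => Nat.gcd a q = 1)).card : ℝ) * (q : ℝ) ^ 3
            ≤ (q : ℝ) * (q : ℝ) ^ 3 := by
              have : (((Finset.range q).filter (fun a => Nat.gcd a q = 1)).card : ℝ) ≤ q := by
                exact_mod_cast h1
              exact mul_le_mul_of_nonneg_right this (by positivity)
          _ = (q : ℝ) ^ 4 := by ring

open scoped LSeries.notation

lemma Gfun_eq_conv (f : MvPolynomial (Fin 3) ℤ) :
    (fun n => SqAll f n / (n : ℂ) ^ 3) = (fun n => Sq f n / (n : ℂ) ^ 3) ⍟ (1 : ℕ → ℂ) := by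
  funext n
  rcases eq_or_ne n 0 with rfl | hn
  · simp [SqAll, LSeries.convolution_map_zero]
  · rw [LSeries.convolution_def]
    simp only
    rw [Nat.sum_divisorsAntidiagonal (f := fun d e => Sq f d / (d : ℂ) ^ 3 * (1 : ℕ → ℂ) e)]
    rw [SqAll_eq f n hn, Finset.sum_div]
    refine Finset.sum_congr rfl fun d hd => ?_
    rw [Nat.mem_divisors] at hd
    obtain ⟨hdvd, -⟩ := hd
    have hd0 : (d : ℂ) ≠ 0 := Nat.cast_ne_zero.mpr fun h => by
      subst h; exact hn (Nat.eq_zero_of_zero_dvd hdvd)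
    have hx : ((n / d : ℕ) : ℂ) * (d : ℂ) = (n : ℂ) := by
      exact_mod_cast congrArg (fun k : ℕ => (k : ℂ)) (Nat.div_mul_cancel hdvd)
    have hx0 : ((n / d : ℕ) : ℂ) ≠ 0 := by
      intro h
      rw [h, zero_mul] at hx
      exact (Nat.cast_ne_zero.mpr hn : (n : ℂ) ≠ 0) hx.symm
    have hn3 : (n : ℂ) ^ 3 = ((n / d : ℕ) : ℂ) ^ 3 * (d : ℂ) ^ 3 := by
      rw [← hx]; ring
    rw [hn3, Pi.one_apply, mul_one, mul_div_mul_left _ _ (pow_ne_zero 3 hx0)]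

lemma Hfun_summable (f : MvPolynomial (Fin 3) ℤ) (s : ℂ) (hs : 2 < s.re) :
    LSeriesSummable (fun n => Sq f n / (n : ℂ) ^ 3) s := by
  refine LSeriesSummable_of_le_const_mul_rpow (x := 2) hs ⟨1, fun n hn => ?_⟩
  have hn0 : 0 < (n : ℝ) := by exact_mod_cast Nat.pos_of_ne_zero hn
  rw [norm_div, norm_pow, Complex.norm_natCast]
  rw [show (2 : ℝ) - 1 = 1 by norm_num, Real.rpow_one, one_mul]
  rw [div_le_iff₀ (by positivity)]
  calc ‖Sq f n‖ ≤ (n : ℝ) ^ 4 := norm_Sq_le f n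
    _ = (n : ℝ) * (n : ℝ) ^ 3 := by ring

lemma term_div_cube (c : ℕ → ℂ) (s : ℂ) (N : ℕ) (hN : N ≠ 0) :
    LSeries.term (fun k => c k / (k : ℂ) ^ 3) (s + 1) N = ((N : ℕ) : ℂ) ^ (-s - 4) * c N := by
  rw [LSeries.term_of_ne_zero hN]
  have hNc : (N : ℂ) ≠ 0 := Nat.cast_ne_zero.mpr hN
  have h4 : (N : ℂ) ^ (-s - 4) = ((N : ℂ) ^ (3 : ℕ) * (N : ℂ) ^ (s + 1))⁻¹ := by
    rw [← Complex.cpow_natCast (N : ℂ) 3, ← Complex.cpow_add _ _ hNc, ← Complex.cpow_neg]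
    congr 1
    push_cast
    ring
  rw [h4, div_div, div_eq_inv_mul]

theorem statement2 (f : MvPolynomial (Fin 3) ℤ) (s : ℂ) (hs : 1 < s.re) :
    Summable (fun q : ℕ => ‖((q + 1 : ℕ) : ℂ) ^ (-s - 4) * SqAll f (q + 1)‖) ∧
    ∑' q : ℕ, ((q + 1 : ℕ) : ℂ) ^ (-s - 4) * SqAll f (q + 1)
      = (∑' q : ℕ, ((q + 1 : ℕ) : ℂ) ^ (-(s + 1) - 3) * Sq f (q + 1)) * riemannZeta (s + 1) := by
  have hs1 : 1 < (s + 1).re := by rw [Complex.add_re, Complex.one_re]; linarith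
  have hs2 : 2 < (s + 1).re := by rw [Complex.add_re, Complex.one_re]; linarith
  have hH := Hfun_summable f (s + 1) hs2
  have h1 : LSeriesSummable 1 (s + 1) := LSeriesSummable_one_iff.mpr hs1
  have hGsum : LSeriesSummable (fun n => SqAll f n / (n : ℂ) ^ 3) (s + 1) := by
    rw [Gfun_eq_conv f]; exact hH.convolution h1
  have hterm_G : ∀ n : ℕ, LSeries.term (fun k => SqAll f k / (k : ℂ) ^ 3) (s + 1) (n + 1)
      = ((n + 1 : ℕ) : ℂ) ^ (-s - 4) * SqAll f (n + 1) :=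
    fun n => term_div_cube (SqAll f) s (n + 1) n.succ_ne_zero
  have hterm_H : ∀ n : ℕ, LSeries.term (fun k => Sq f k / (k : ℂ) ^ 3) (s + 1) (n + 1)
      = ((n + 1 : ℕ) : ℂ) ^ (-(s + 1) - 3) * Sq f (n + 1) := by
    intro n
    rw [show -(s + 1) - 3 = -s - 4 by ring]
    exact term_div_cube (Sq f) s (n + 1) n.succ_ne_zero
  constructor
  · have h := (summable_nat_add_iff 1).mpr hGsum
    exact summable_norm_iff.mpr ((summable_congr hterm_G).mp h)
  · calc ∑' q : ℕ, ((q + 1 : ℕ) : ℂ) ^ (-s - 4) * SqAll f (q + 1)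
        = ∑' q : ℕ, LSeries.term (fun k => SqAll f k / (k : ℂ) ^ 3) (s + 1) (q + 1) :=
        tsum_congr fun q => (hterm_G q).symm
      _ = LSeries (fun k => SqAll f k / (k : ℂ) ^ 3) (s + 1) := by
        rw [LSeries, Summable.tsum_eq_zero_add hGsum, LSeries.term_zero, zero_add]
      _ = LSeries (fun k => Sq f k / (k : ℂ) ^ 3) (s + 1) * riemannZeta (s + 1) := by
        rw [Gfun_eq_conv f, LSeries_convolution' hH h1, LSeries_one_eq_riemannZeta hs1]
      _ = (∑' q : ℕ, ((q + 1 : ℕ) : ℂ) ^ (-(s + 1) - 3) * Sq f (q + 1)) * riemannZeta (s + 1) := by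
        congr 1
        rw [LSeries, Summable.tsum_eq_zero_add hH, LSeries.term_zero, zero_add]
        exact tsum_congr fun q => hterm_H q
end

section
/- Let k ≥ 1 be an integer and p a prime with p ∤ 3k, and set ν(p) = #{(x,y,z) ∈ 𝔽_p³ : x³ + k y³ + k z³ = 1}. If p ≡ 2 (mod 3) then ν(p) = p². If p ≡ 1 (mod 3), then for any multiplicative character ψ of 𝔽_p of order 3 (extended by ψ(0) = 0) one has ν(p) = p² + (4 + c) p − 2 Re( J(ψ,ψ) ψ(k) ), where J(ψ,ψ) = Σ_{u ∈ 𝔽_p} ψ(u) ψ(1−u) is the Jacobi sum and c = 2 if k^{(p−1)/3} ≡ 1 (mod p) and c = −1 otherwise. -/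
open Complex

/-- The number of solutions of `x³ + k y³ + k z³ = 1` in `𝔽_p³`. -/
noncomputable def nuCount (k p : ℕ) : ℕ :=
  Nat.card {v : ZMod p × ZMod p × ZMod p //
    v.1 ^ 3 + (k : ZMod p) * v.2.1 ^ 3 + (k : ZMod p) * v.2.2 ^ 3 = 1}

open Finset

section Aux

variable {p : ℕ} [hpp : Fact p.Prime]

private lemma nuCount_eq_sum (k : ℕ) :
    nuCount k p = ∑ y : ZMod p, ∑ z : ZMod p,
      (univ.filter fun x : ZMod p =>
        x ^ 3 = 1 - (k : ZMod p) * y ^ 3 - (k : ZMod p) * z ^ 3).card := by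
  classical
  rw [nuCount, Nat.card_eq_fintype_card, Fintype.card_subtype]
  rw [Finset.card_filter]
  simp only [Fintype.sum_prod_type]
  rw [Finset.sum_comm]
  refine Finset.sum_congr rfl fun y _ => ?_
  rw [Finset.sum_comm]
  refine Finset.sum_congr rfl fun z _ => ?_
  rw [Finset.card_filter]
  refine Finset.sum_congr rfl fun x _ => ?_
  refine if_congr ?_ rfl rfl
  constructor
  · intro h; linear_combination h
  · intro h; linear_combination h

private lemma part1 (k : ℕ) (hp2 : p % 3 = 2) : nuCount k p = p ^ 2 := by
  have hple : 2 ≤ p := hpp.out.two_le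
  have hinj : Function.Injective (fun x : ZMod p => x ^ 3) := by
    intro x y h
    simp only at h
    by_cases hy : y = 0
    · subst hy
      simpa [pow_eq_zero_iff] using h
    · have hx : x ≠ 0 := by
        intro hx0; subst hx0
        exact hy (by simpa [eq_comm, pow_eq_zero_iff] using h)
      have hxy : (x * y⁻¹) ^ 3 = 1 := by
        field_simp
        exact h
      have hu : x * y⁻¹ ≠ 0 := mul_ne_zero hx (inv_ne_zero hy)
      have h2 : (x * y⁻¹) ^ (p - 1) = 1 := ZMod.pow_card_sub_one_eq_one hu
      have ho1 : orderOf (x * y⁻¹) ∣ 3 := orderOf_dvd_of_pow_eq_one hxy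
      have ho2 : orderOf (x * y⁻¹) ∣ p - 1 := orderOf_dvd_of_pow_eq_one h2
      have hcop : Nat.gcd 3 (p - 1) = 1 := by
        have h31 : ¬ (3 ∣ p - 1) := by omega
        have := (Nat.Prime.coprime_iff_not_dvd (by norm_num)).mpr h31
        exact this
      have : orderOf (x * y⁻¹) = 1 := Nat.dvd_one.mp (hcop ▸ Nat.dvd_gcd ho1 ho2)
      have hxy1 : x * y⁻¹ = 1 := orderOf_eq_one_iff.mp this
      field_simp at hxy1
      exact hxy1
  have hbij : Function.Bijective (fun x : ZMod p => x ^ 3) :=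
    Finite.injective_iff_bijective.mp hinj
  rw [nuCount_eq_sum k]
  have hone : ∀ t : ZMod p, (univ.filter fun x : ZMod p => x ^ 3 = t).card = 1 := by
    intro t
    obtain ⟨x, hx⟩ := hbij.2 t
    simp only at hx
    rw [Finset.card_eq_one]
    refine ⟨x, ?_⟩
    ext z
    simp only [Finset.mem_filter, Finset.mem_univ, true_and, Finset.mem_singleton]
    constructor
    · intro h; exact hinj (by simpa using h.trans hx.symm)
    · rintro rfl; exact hx
  simp only [hone]
  simp [Finset.card_univ, ZMod.card, sq]

private lemma sum_affine {A : ZMod p} (hA : A ≠ 0) (B : ZMod p)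
    (χ : MulChar (ZMod p) ℂ) :
    ∑ c : ZMod p, χ (B - A * c) = ∑ c : ZMod p, χ c := by
  have := Equiv.sum_comp ((Equiv.mulLeft₀ A hA).trans (Equiv.subLeft B)) χ
  simpa using this

private lemma sum_one_char : ∑ c : ZMod p, (1 : MulChar (ZMod p) ℂ) c = (p : ℂ) - 1 := by
  classical
  rw [MulChar.sum_one_eq_card_units, ZMod.card_units]
  have : (1 : ℕ) ≤ p := hpp.out.one_le
  push_cast [this]
  ring

private lemma jsub {A u : ZMod p} (hA : A ≠ 0) (hu : u ≠ 0)
    (χ χ' : MulChar (ZMod p) ℂ) :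
    ∑ b : ZMod p, χ b * χ' (u - A * b)
      = χ (u * A⁻¹) * χ' u * jacobiSum χ χ' := by
  have h0 : u * A⁻¹ ≠ 0 := mul_ne_zero hu (inv_ne_zero hA)
  rw [← Equiv.sum_comp (Equiv.mulLeft₀ (u * A⁻¹) h0)
    (fun b => χ b * χ' (u - A * b)), jacobiSum, Finset.mul_sum]
  refine Finset.sum_congr rfl fun t _ => ?_
  simp only [Equiv.coe_trans, Function.comp_apply, Equiv.mulLeft₀_apply]
  have harg : u - A * (u * A⁻¹ * t) = u * (1 - t) := by
    field_simp
  rw [harg, map_mul χ, map_mul χ']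
  ring


private lemma cube_iff (ψ : MulChar (ZMod p) ℂ) (hψ : orderOf ψ = 3)
    {a : ZMod p} (ha : a ≠ 0) : ψ a = 1 ↔ ∃ x : ZMod p, x ^ 3 = a := by
  have hψ3 : ψ ^ 3 = 1 := hψ ▸ pow_orderOf_eq_one ψ
  constructor
  · intro h1
    obtain ⟨g, hg⟩ := IsCyclic.exists_generator (α := (ZMod p)ˣ)
    have hg3 : (ψ (g : ZMod p)) ^ 3 = 1 := by
      rw [← MulChar.pow_apply_coe, hψ3, MulChar.one_apply_coe]
    have hgne : ψ (g : ZMod p) ≠ 1 := by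
      intro h
      have heq : ψ = 1 := (MulChar.eq_iff hg ψ 1).mpr (by rw [h, MulChar.one_apply_coe])
      rw [heq] at hψ
      simp at hψ
    have hord : orderOf (ψ (g : ZMod p)) = 3 := by
      rcases (Nat.Prime.eq_one_or_self_of_dvd (by norm_num)
        _ (orderOf_dvd_of_pow_eq_one hg3)) with h | h
      · exact absurd (orderOf_eq_one_iff.mp h) hgne
      · exact h
    have hau : IsUnit a := isUnit_iff_ne_zero.mpr ha
    obtain ⟨n, hn⟩ : ∃ n : ℕ, g ^ n = hau.unit := by
      have := hg hau.unit
      rw [← mem_powers_iff_mem_zpowers] at this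
      exact (Submonoid.mem_powers_iff _ _).mp this
    have hpow : (ψ (g : ZMod p)) ^ n = 1 := by
      have : ((g ^ n : (ZMod p)ˣ) : ZMod p) = a := by rw [hn, IsUnit.unit_spec]
      rw [← map_pow, ← Units.val_pow_eq_pow_val, this, h1]
    have h3n : 3 ∣ n := hord ▸ orderOf_dvd_of_pow_eq_one hpow
    obtain ⟨m, rfl⟩ := h3n
    refine ⟨((g ^ m : (ZMod p)ˣ) : ZMod p), ?_⟩
    rw [← Units.val_pow_eq_pow_val, ← pow_mul, mul_comm m 3, hn, IsUnit.unit_spec]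
  · rintro ⟨x, rfl⟩
    have hx : x ≠ 0 := fun h => ha (by simp [h])
    calc ψ (x ^ 3) = (ψ x) ^ 3 := map_pow ψ x 3
    _ = (ψ ^ 3) x := (MulChar.pow_apply' ψ three_ne_zero x).symm
    _ = 1 := by rw [hψ3, MulChar.one_apply (isUnit_iff_ne_zero.mpr hx)]

private lemma euler_iff (h3 : 3 ∣ p - 1) {a : ZMod p} (ha : a ≠ 0) :
    a ^ ((p - 1) / 3) = 1 ↔ ∃ x : ZMod p, x ^ 3 = a := by
  have hple : 2 ≤ p := hpp.out.two_le
  constructor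
  · intro h1
    obtain ⟨g, hg⟩ := IsCyclic.exists_generator (α := (ZMod p)ˣ)
    have horder : orderOf g = p - 1 := by
      rw [orderOf_eq_card_of_forall_mem_zpowers hg, Nat.card_eq_fintype_card,
        ZMod.card_units]
    have hau : IsUnit a := isUnit_iff_ne_zero.mpr ha
    obtain ⟨n, hn⟩ : ∃ n : ℕ, g ^ n = hau.unit := by
      have := hg hau.unit
      rw [← mem_powers_iff_mem_zpowers] at this
      exact (Submonoid.mem_powers_iff _ _).mp this
    have hunits : hau.unit ^ ((p - 1) / 3) = 1 := by
      ext
      rw [Units.val_pow_eq_pow_val, IsUnit.unit_spec, h1, Units.val_one]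
    rw [← hn, ← pow_mul] at hunits
    have hd : (p - 1) ∣ n * ((p - 1) / 3) := by
      have := orderOf_dvd_of_pow_eq_one hunits
      rwa [horder] at this
    obtain ⟨m, hm⟩ := h3
    have hm0 : m ≠ 0 := by omega
    have hdn : 3 ∣ n := by
      rw [hm, Nat.mul_div_cancel_left m (by norm_num)] at hd
      obtain ⟨c, hc⟩ := hd
      have : n * m = 3 * c * m := by rw [hc]; ring
      have := Nat.eq_of_mul_eq_mul_right (Nat.pos_of_ne_zero hm0) this
      exact ⟨c, this⟩
    obtain ⟨c, rfl⟩ := hdn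
    refine ⟨((g ^ c : (ZMod p)ˣ) : ZMod p), ?_⟩
    rw [← Units.val_pow_eq_pow_val, ← pow_mul, mul_comm c 3, hn, IsUnit.unit_spec]
  · rintro ⟨x, rfl⟩
    have hx : x ≠ 0 := fun h => ha (by simp [h])
    rw [← pow_mul, Nat.mul_div_cancel' h3, ZMod.pow_card_sub_one_eq_one hx]

private lemma count_cubes (ψ : MulChar (ZMod p) ℂ) (hψ : orderOf ψ = 3) (a : ZMod p) :
    ((univ.filter fun x : ZMod p => x ^ 3 = a).card : ℂ)
      = 1 + ψ a + (ψ ^ 2) a := by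
  classical
  have hψ3 : ψ ^ 3 = 1 := hψ ▸ pow_orderOf_eq_one ψ
  have h3 : (3 : ℕ) ∣ p - 1 := by
    have := MulChar.orderOf_dvd_card_sub_one (ZMod p) ψ
    rwa [hψ, ZMod.card] at this
  by_cases ha : a = 0
  · subst ha
    have hfe : (univ.filter fun x : ZMod p => x ^ 3 = (0 : ZMod p)) = {0} := by
      ext x
      simp [pow_eq_zero_iff (three_ne_zero)]
    rw [hfe]
    simp [MulChar.map_zero]
  · by_cases hcube : ∃ x : ZMod p, x ^ 3 = a
    · obtain ⟨x, rfl⟩ := hcube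
      have hx : x ≠ 0 := fun h => ha (by simp [h])
      have hψa : ψ (x ^ 3) = 1 := (cube_iff ψ hψ ha).mpr ⟨x, rfl⟩
      have hψ2a : (ψ ^ 2) (x ^ 3) = 1 := by
        rw [MulChar.pow_apply' ψ two_ne_zero, hψa, one_pow]
      rw [hψa, hψ2a]
      -- find a primitive cube root of unity
      obtain ⟨g, hg⟩ := IsCyclic.exists_generator (α := (ZMod p)ˣ)
      have horder : orderOf g = p - 1 := by
        rw [orderOf_eq_card_of_forall_mem_zpowers hg, Nat.card_eq_fintype_card,
          ZMod.card_units]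
      obtain ⟨m, hm⟩ := h3
      have hm0 : 0 < m := by
        have := hpp.out.two_le
        omega
      have hζord : orderOf (g ^ m) = 3 := by
        have hgcd : Nat.gcd (3 * m) m = m := by
          rw [Nat.gcd_comm]; exact Nat.gcd_eq_left ⟨3, by ring⟩
        rw [orderOf_pow, horder, hm, hgcd, mul_comm 3 m, Nat.mul_div_cancel_left _ hm0]
      have hζ : IsPrimitiveRoot ((g ^ m : (ZMod p)ˣ) : ZMod p) 3 := by
        have h1 := IsPrimitiveRoot.orderOf (g ^ m)
        rw [hζord] at h1
        exact IsPrimitiveRoot.coe_units_iff.mpr h1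
      have hcard := hζ.card_nthRootsFinset
      have hfe : (univ.filter fun y : ZMod p => y ^ 3 = x ^ 3)
          = (Polynomial.nthRootsFinset 3 (1 : ZMod p)).image (· * x) := by
        ext y
        simp only [mem_filter, mem_univ, true_and, mem_image,
          Polynomial.mem_nthRootsFinset (by norm_num : 0 < 3) (1 : ZMod p)]
        constructor
        · intro h
          refine ⟨y * x⁻¹, ?_, by field_simp⟩
          rw [mul_pow, h]
          field_simp
        · rintro ⟨z, hz, rfl⟩
          rw [mul_pow, hz, one_mul]
      rw [hfe, Finset.card_image_of_injective _ (mul_left_injective₀ hx), hcard]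
      norm_num
    · have hfe : (univ.filter fun y : ZMod p => y ^ 3 = a) = ∅ := by
        rw [Finset.filter_eq_empty_iff]
        intro y _
        exact fun h => hcube ⟨y, h⟩
      have hne : ψ a ≠ 1 := fun h => hcube ((cube_iff ψ hψ ha).mp h)
      have ha3 : (ψ a) ^ 3 = 1 := by
        rw [← MulChar.pow_apply' ψ three_ne_zero, hψ3,
          MulChar.one_apply (isUnit_iff_ne_zero.mpr ha)]
      have hz : (ψ a - 1) * (1 + ψ a + (ψ a) ^ 2) = 0 := by linear_combination ha3
      rcases mul_eq_zero.mp hz with h | h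
      · exact absurd (by linear_combination h) hne
      · rw [hfe, MulChar.pow_apply' ψ two_ne_zero]
        simp only [Finset.card_empty, Nat.cast_zero]
        linear_combination -h

private lemma sum_cubes (ψ : MulChar (ZMod p) ℂ) (hψ : orderOf ψ = 3)
    (f : ZMod p → ℂ) :
    ∑ x : ZMod p, f (x ^ 3) = ∑ a : ZMod p, (1 + ψ a + (ψ ^ 2) a) * f a := by
  classical
  rw [← Finset.sum_fiberwise univ (fun x : ZMod p => x ^ 3) (fun x => f (x ^ 3))]
  refine Finset.sum_congr rfl fun a _ => ?_
  rw [← count_cubes ψ hψ a]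
  rw [Finset.sum_congr rfl (fun x hx => by rw [(Finset.mem_filter.mp hx).2]),
    Finset.sum_const, nsmul_eq_mul]


private lemma hone_mul (χ : MulChar (ZMod p) ℂ) (c : ZMod p) :
    (1 : MulChar (ZMod p) ℂ) c * χ c = χ c := by
  by_cases h : c = 0
  · simp [h, MulChar.map_zero]
  · rw [MulChar.one_apply (isUnit_iff_ne_zero.mpr h), one_mul]

private lemma main_core (K : ZMod p) (hk : K ≠ 0)
    (ψ : MulChar (ZMod p) ℂ) (hψ : orderOf ψ = 3) :
    (∑ b : ZMod p, (1 + ψ b + (ψ ^ 2) b) * ∑ c : ZMod p, (1 + ψ c + (ψ ^ 2) c) *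
        (1 + ψ (1 - K * b - K * c) + (ψ ^ 2) (1 - K * b - K * c)))
      = (p : ℂ) ^ 2 + 4 * p + (ψ K + (ψ ^ 2) K) * p
        - jacobiSum ψ ψ * ψ K - jacobiSum (ψ ^ 2) (ψ ^ 2) * (ψ ^ 2) K := by
  classical
  have hψ3 : ψ ^ 3 = 1 := hψ ▸ pow_orderOf_eq_one ψ
  have hψ1 : ψ ≠ 1 := by intro h; rw [h] at hψ; simp at hψ
  have hψ2 : ψ ^ 2 ≠ 1 := by
    intro h
    have h' := orderOf_dvd_of_pow_eq_one h
    rw [hψ] at h'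
    norm_num at h'
  have hneg : ψ (-1 : ZMod p) = 1 := by
    have h2 : ψ (-1) * ψ (-1) = 1 := by rw [← map_mul]; norm_num
    have h3 : ψ (-1 : ZMod p) ^ 3 = 1 := by
      rw [← MulChar.pow_apply' ψ three_ne_zero, hψ3,
        MulChar.one_apply (isUnit_one.neg)]
    linear_combination h3 - ψ (-1 : ZMod p) * h2
  have hinv : ψ ^ 2 = ψ⁻¹ := by
    apply eq_inv_of_mul_eq_one_left
    rw [← pow_succ]
    exact hψ3
  have hJ12 : jacobiSum ψ (ψ ^ 2) = -1 := by
    rw [hinv, jacobiSum_nontrivial_inv hψ1, hneg]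
  have hJ21 : jacobiSum (ψ ^ 2) ψ = -1 := by rw [jacobiSum_comm]; exact hJ12
  have hJone : jacobiSum ψ (1 : MulChar (ZMod p) ℂ) = -1 := by
    rw [jacobiSum_comm]; exact jacobiSum_one_nontrivial hψ1
  have hJone2 : jacobiSum (ψ ^ 2) (1 : MulChar (ZMod p) ℂ) = -1 := by
    rw [jacobiSum_comm]; exact jacobiSum_one_nontrivial hψ2
  have hJJ : jacobiSum ψ ψ * jacobiSum (ψ ^ 2) (ψ ^ 2) = (p : ℂ) := by
    have hchar : ringChar ℂ ≠ ringChar (ZMod p) := by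
      rw [ringChar.eq_zero, ZMod.ringChar_zmod_n]
      exact fun h => hpp.out.ne_zero h.symm
    have hψψ : ψ * ψ ≠ 1 := by rwa [← sq]
    have h := jacobiSum_mul_jacobiSum_inv hchar hψ1 hψ1 hψψ
    rw [ZMod.card] at h
    rw [hinv]
    exact h
  have hKu : IsUnit K := isUnit_iff_ne_zero.mpr hk
  have hKinv : K * K⁻¹ = 1 := mul_inv_cancel₀ hk
  have haai : ψ K * ψ K⁻¹ = 1 := by rw [← map_mul, hKinv, map_one]
  have ha3 : ψ K ^ 3 = 1 := by
    rw [← MulChar.pow_apply' ψ three_ne_zero, hψ3, MulChar.one_apply hKu]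
  have hai : ψ K⁻¹ = ψ K ^ 2 := by
    linear_combination ψ K ^ 2 * haai - ψ K⁻¹ * ha3
  have hp2 : ∀ u : ZMod p, (ψ ^ 2) u = ψ u ^ 2 := fun u => MulChar.pow_apply' ψ two_ne_zero u
  have hp3' : ∀ u : ZMod p, (1 : MulChar (ZMod p) ℂ) u = ψ u ^ 3 := fun u => by
    rw [← hψ3, MulChar.pow_apply' ψ three_ne_zero]
  have e1 : ∑ c : ZMod p, ψ c = 0 := MulChar.sum_eq_zero_of_ne_one hψ1
  have e2 : ∑ c : ZMod p, (ψ ^ 2) c = 0 := MulChar.sum_eq_zero_of_ne_one hψ2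
  have ecard : ∑ _c : ZMod p, (1 : ℂ) = (p : ℂ) := by
    rw [Finset.sum_const, Finset.card_univ, ZMod.card, nsmul_eq_mul, mul_one]
  -- inner sum, for u ≠ 0
  have inner : ∀ u : ZMod p, u ≠ 0 →
      (∑ c : ZMod p, (1 + ψ c + (ψ ^ 2) c) * (1 + ψ (u - K * c) + (ψ ^ 2) (u - K * c)))
        = (p : ℂ) + (ψ K⁻¹ * jacobiSum ψ ψ) * (ψ ^ 2) u
          + (-(ψ K⁻¹) - (ψ ^ 2) K⁻¹) * (1 : MulChar (ZMod p) ℂ) u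
          + ((ψ ^ 2) K⁻¹ * jacobiSum (ψ ^ 2) (ψ ^ 2)) * ψ u := by
    intro u hu
    have h1u : (1 : MulChar (ZMod p) ℂ) u = 1 := MulChar.one_apply (isUnit_iff_ne_zero.mpr hu)
    have hu3 : ψ u ^ 3 = 1 := by rw [← hp3' u, h1u]
    have f01 : ∑ c : ZMod p, ψ (u - K * c) = 0 := by rw [sum_affine hk u ψ]; exact e1
    have f02 : ∑ c : ZMod p, (ψ ^ 2) (u - K * c) = 0 := by
      rw [sum_affine hk u (ψ ^ 2)]; exact e2
    have f11 := jsub hk hu ψ ψ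
    have f12 := jsub hk hu ψ (ψ ^ 2)
    have f21 := jsub hk hu (ψ ^ 2) ψ
    have f22 := jsub hk hu (ψ ^ 2) (ψ ^ 2)
    calc (∑ c : ZMod p, (1 + ψ c + (ψ ^ 2) c) * (1 + ψ (u - K * c) + (ψ ^ 2) (u - K * c)))
        = (∑ _c : ZMod p, (1 : ℂ)) + (∑ c : ZMod p, ψ (u - K * c))
            + (∑ c : ZMod p, (ψ ^ 2) (u - K * c)) + (∑ c : ZMod p, ψ c)
            + (∑ c : ZMod p, (ψ ^ 2) c)
            + (∑ c : ZMod p, ψ c * ψ (u - K * c))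
            + (∑ c : ZMod p, ψ c * (ψ ^ 2) (u - K * c))
            + (∑ c : ZMod p, (ψ ^ 2) c * ψ (u - K * c))
            + (∑ c : ZMod p, (ψ ^ 2) c * (ψ ^ 2) (u - K * c)) := by
          simp only [← Finset.sum_add_distrib]
          exact Finset.sum_congr rfl fun c _ => by ring
      _ = _ := by
          rw [ecard, f01, f02, e1, e2, f11, f12, f21, f22, h1u]
          rw [map_mul ψ u K⁻¹, map_mul (ψ ^ 2) u K⁻¹, hp2 u, hp2 K⁻¹, hJ12, hJ21]
          linear_combination (-(ψ K⁻¹) - ψ K⁻¹ ^ 2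
            + ψ K⁻¹ ^ 2 * jacobiSum (ψ ^ 2) (ψ ^ 2) * ψ u) * hu3
  -- inner sum at u = 0
  have hG0 : (∑ c : ZMod p, (1 + ψ c + (ψ ^ 2) c) *
        (1 + ψ (0 - K * c) + (ψ ^ 2) (0 - K * c)))
      = (p : ℂ) + (ψ K + (ψ ^ 2) K) * ((p : ℂ) - 1) := by
    have harg : ∀ c : ZMod p, (0 : ZMod p) - K * c = -K * c := fun c => by ring
    have hnegK : ψ (-K) = ψ K := by
      rw [show (-K : ZMod p) = -1 * K by ring, map_mul, hneg, one_mul]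
    have hnegK2 : (ψ ^ 2) (-K) = (ψ ^ 2) K := by rw [hp2, hp2, hnegK]
    have f01 : ∑ c : ZMod p, ψ (0 - K * c) = 0 := by rw [sum_affine hk 0 ψ]; exact e1
    have f02 : ∑ c : ZMod p, (ψ ^ 2) (0 - K * c) = 0 := by
      rw [sum_affine hk 0 (ψ ^ 2)]; exact e2
    have f11 : ∑ c : ZMod p, ψ c * ψ (0 - K * c) = 0 := by
      calc ∑ c : ZMod p, ψ c * ψ (0 - K * c)
          = ∑ c : ZMod p, ψ (-K) * (ψ ^ 2) c :=
            Finset.sum_congr rfl fun c _ => by rw [harg c, map_mul, hp2 c]; ring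
        _ = ψ (-K) * ∑ c : ZMod p, (ψ ^ 2) c := by rw [Finset.mul_sum]
        _ = 0 := by rw [e2, mul_zero]
    have f12 : ∑ c : ZMod p, ψ c * (ψ ^ 2) (0 - K * c) = (ψ ^ 2) K * ((p : ℂ) - 1) := by
      calc ∑ c : ZMod p, ψ c * (ψ ^ 2) (0 - K * c)
          = ∑ c : ZMod p, (ψ ^ 2) (-K) * (1 : MulChar (ZMod p) ℂ) c :=
            Finset.sum_congr rfl fun c _ => by
              rw [harg c, map_mul (ψ ^ 2) (-K) c, hp2 c, hp3' c]; ring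
        _ = (ψ ^ 2) (-K) * ((p : ℂ) - 1) := by rw [← Finset.mul_sum, sum_one_char]
        _ = (ψ ^ 2) K * ((p : ℂ) - 1) := by rw [hnegK2]
    have f21 : ∑ c : ZMod p, (ψ ^ 2) c * ψ (0 - K * c) = ψ K * ((p : ℂ) - 1) := by
      calc ∑ c : ZMod p, (ψ ^ 2) c * ψ (0 - K * c)
          = ∑ c : ZMod p, ψ (-K) * (1 : MulChar (ZMod p) ℂ) c :=
            Finset.sum_congr rfl fun c _ => by
              rw [harg c, map_mul ψ (-K) c, hp2 c, hp3' c]; ring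
        _ = ψ (-K) * ((p : ℂ) - 1) := by rw [← Finset.mul_sum, sum_one_char]
        _ = ψ K * ((p : ℂ) - 1) := by rw [hnegK]
    have f22 : ∑ c : ZMod p, (ψ ^ 2) c * (ψ ^ 2) (0 - K * c) = 0 := by
      calc ∑ c : ZMod p, (ψ ^ 2) c * (ψ ^ 2) (0 - K * c)
          = ∑ c : ZMod p, (ψ ^ 2) (-K) * ((1 : MulChar (ZMod p) ℂ) c * ψ c) :=
            Finset.sum_congr rfl fun c _ => by
              rw [harg c, map_mul (ψ ^ 2) (-K) c, hp2 c, hp2 (-K), hp3' c]; ring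
        _ = ∑ c : ZMod p, (ψ ^ 2) (-K) * ψ c :=
            Finset.sum_congr rfl fun c _ => by rw [hone_mul]
        _ = (ψ ^ 2) (-K) * ∑ c : ZMod p, ψ c := by rw [Finset.mul_sum]
        _ = 0 := by rw [e1, mul_zero]
    calc (∑ c : ZMod p, (1 + ψ c + (ψ ^ 2) c) *
          (1 + ψ (0 - K * c) + (ψ ^ 2) (0 - K * c)))
        = (∑ _c : ZMod p, (1 : ℂ)) + (∑ c : ZMod p, ψ (0 - K * c))
            + (∑ c : ZMod p, (ψ ^ 2) (0 - K * c)) + (∑ c : ZMod p, ψ c)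
            + (∑ c : ZMod p, (ψ ^ 2) c)
            + (∑ c : ZMod p, ψ c * ψ (0 - K * c))
            + (∑ c : ZMod p, ψ c * (ψ ^ 2) (0 - K * c))
            + (∑ c : ZMod p, (ψ ^ 2) c * ψ (0 - K * c))
            + (∑ c : ZMod p, (ψ ^ 2) c * (ψ ^ 2) (0 - K * c)) := by
          simp only [← Finset.sum_add_distrib]
          exact Finset.sum_congr rfl fun c _ => by ring
      _ = _ := by
          rw [ecard, f01, f02, e1, e2, f11, f12, f21, f22]
          ring
  -- outer sum of the generic inner value
  have houter : (∑ b : ZMod p, (1 + ψ b + (ψ ^ 2) b) *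
        ((p : ℂ) + (ψ K⁻¹ * jacobiSum ψ ψ) * (ψ ^ 2) (1 - K * b)
          + (-(ψ K⁻¹) - (ψ ^ 2) K⁻¹) * (1 : MulChar (ZMod p) ℂ) (1 - K * b)
          + ((ψ ^ 2) K⁻¹ * jacobiSum (ψ ^ 2) (ψ ^ 2)) * ψ (1 - K * b)))
      = (p : ℂ) * p + (-(ψ K⁻¹) - (ψ ^ 2) K⁻¹) * ((p : ℂ) - 1)
        + (ψ K⁻¹ * jacobiSum ψ ψ) * (-(ψ K⁻¹))
        + (ψ K⁻¹ * jacobiSum ψ ψ) * ((ψ ^ 2) K⁻¹ * jacobiSum (ψ ^ 2) (ψ ^ 2))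
        + (-(ψ K⁻¹) - (ψ ^ 2) K⁻¹) * (-(ψ K⁻¹))
        + (-(ψ K⁻¹) - (ψ ^ 2) K⁻¹) * (-((ψ ^ 2) K⁻¹))
        + ((ψ ^ 2) K⁻¹ * jacobiSum (ψ ^ 2) (ψ ^ 2)) * (ψ K⁻¹ * jacobiSum ψ ψ)
        + ((ψ ^ 2) K⁻¹ * jacobiSum (ψ ^ 2) (ψ ^ 2)) * (-((ψ ^ 2) K⁻¹)) := by
    have g0A : ∑ b : ZMod p, (ψ ^ 2) (1 - K * b) = 0 := by
      rw [sum_affine hk 1 (ψ ^ 2)]; exact e2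
    have g0B : ∑ b : ZMod p, (1 : MulChar (ZMod p) ℂ) (1 - K * b) = (p : ℂ) - 1 := by
      rw [sum_affine hk 1 (1 : MulChar (ZMod p) ℂ)]; exact sum_one_char
    have g0C : ∑ b : ZMod p, ψ (1 - K * b) = 0 := by
      rw [sum_affine hk 1 ψ]; exact e1
    have g1A : ∑ b : ZMod p, ψ b * (ψ ^ 2) (1 - K * b) = -(ψ K⁻¹) := by
      rw [jsub hk one_ne_zero ψ (ψ ^ 2), one_mul, map_one, hJ12]; ring
    have g1B : ∑ b : ZMod p, ψ b * (1 : MulChar (ZMod p) ℂ) (1 - K * b) = -(ψ K⁻¹) := by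
      rw [jsub hk one_ne_zero ψ 1, one_mul, map_one, hJone]; ring
    have g1C : ∑ b : ZMod p, ψ b * ψ (1 - K * b) = ψ K⁻¹ * jacobiSum ψ ψ := by
      rw [jsub hk one_ne_zero ψ ψ, one_mul, map_one]; ring
    have g2A : ∑ b : ZMod p, (ψ ^ 2) b * (ψ ^ 2) (1 - K * b)
        = (ψ ^ 2) K⁻¹ * jacobiSum (ψ ^ 2) (ψ ^ 2) := by
      rw [jsub hk one_ne_zero (ψ ^ 2) (ψ ^ 2), one_mul, map_one]; ring
    have g2B : ∑ b : ZMod p, (ψ ^ 2) b * (1 : MulChar (ZMod p) ℂ) (1 - K * b)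
        = -((ψ ^ 2) K⁻¹) := by
      rw [jsub hk one_ne_zero (ψ ^ 2) 1, one_mul, map_one, hJone2]; ring
    have g2C : ∑ b : ZMod p, (ψ ^ 2) b * ψ (1 - K * b) = -((ψ ^ 2) K⁻¹) := by
      rw [jsub hk one_ne_zero (ψ ^ 2) ψ, one_mul, map_one, hJ21]; ring
    calc (∑ b : ZMod p, (1 + ψ b + (ψ ^ 2) b) *
          ((p : ℂ) + (ψ K⁻¹ * jacobiSum ψ ψ) * (ψ ^ 2) (1 - K * b)
            + (-(ψ K⁻¹) - (ψ ^ 2) K⁻¹) * (1 : MulChar (ZMod p) ℂ) (1 - K * b)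
            + ((ψ ^ 2) K⁻¹ * jacobiSum (ψ ^ 2) (ψ ^ 2)) * ψ (1 - K * b)))
        = (p : ℂ) * (∑ _b : ZMod p, (1 : ℂ)) + (p : ℂ) * (∑ b : ZMod p, ψ b)
            + (p : ℂ) * (∑ b : ZMod p, (ψ ^ 2) b)
            + (ψ K⁻¹ * jacobiSum ψ ψ) * (∑ b : ZMod p, (ψ ^ 2) (1 - K * b))
            + (ψ K⁻¹ * jacobiSum ψ ψ) * (∑ b : ZMod p, ψ b * (ψ ^ 2) (1 - K * b))
            + (ψ K⁻¹ * jacobiSum ψ ψ) * (∑ b : ZMod p, (ψ ^ 2) b * (ψ ^ 2) (1 - K * b))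
            + (-(ψ K⁻¹) - (ψ ^ 2) K⁻¹) * (∑ b : ZMod p, (1 : MulChar (ZMod p) ℂ) (1 - K * b))
            + (-(ψ K⁻¹) - (ψ ^ 2) K⁻¹) * (∑ b : ZMod p, ψ b * (1 : MulChar (ZMod p) ℂ) (1 - K * b))
            + (-(ψ K⁻¹) - (ψ ^ 2) K⁻¹) * (∑ b : ZMod p, (ψ ^ 2) b * (1 : MulChar (ZMod p) ℂ) (1 - K * b))
            + ((ψ ^ 2) K⁻¹ * jacobiSum (ψ ^ 2) (ψ ^ 2)) * (∑ b : ZMod p, ψ (1 - K * b))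
            + ((ψ ^ 2) K⁻¹ * jacobiSum (ψ ^ 2) (ψ ^ 2)) * (∑ b : ZMod p, ψ b * ψ (1 - K * b))
            + ((ψ ^ 2) K⁻¹ * jacobiSum (ψ ^ 2) (ψ ^ 2)) * (∑ b : ZMod p, (ψ ^ 2) b * ψ (1 - K * b)) := by
          simp only [Finset.mul_sum, ← Finset.sum_add_distrib]
          exact Finset.sum_congr rfl fun b _ => by ring
      _ = _ := by
          rw [ecard, e1, e2, g0A, g0B, g0C, g1A, g1B, g1C, g2A, g2B, g2C]
          ring
  -- split the outer sum at b = K⁻¹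
  have hbK : ∀ b : ZMod p, b ≠ K⁻¹ → (1 : ZMod p) - K * b ≠ 0 := by
    intro b hb h
    apply hb
    have h1 : K * b = 1 := by linear_combination -h
    rw [← hKinv] at h1
    exact mul_left_cancel₀ hk h1
  have hsplit : ∀ b : ZMod p,
      ((1 + ψ b + (ψ ^ 2) b) * ∑ c : ZMod p, (1 + ψ c + (ψ ^ 2) c) *
          (1 + ψ (1 - K * b - K * c) + (ψ ^ 2) (1 - K * b - K * c)))
        = (1 + ψ b + (ψ ^ 2) b) *
            ((p : ℂ) + (ψ K⁻¹ * jacobiSum ψ ψ) * (ψ ^ 2) (1 - K * b)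
              + (-(ψ K⁻¹) - (ψ ^ 2) K⁻¹) * (1 : MulChar (ZMod p) ℂ) (1 - K * b)
              + ((ψ ^ 2) K⁻¹ * jacobiSum (ψ ^ 2) (ψ ^ 2)) * ψ (1 - K * b))
          + (if b = K⁻¹ then (1 + ψ K⁻¹ + (ψ ^ 2) K⁻¹) * ((ψ K + (ψ ^ 2) K) * ((p : ℂ) - 1))
              else 0) := by
    intro b
    by_cases hb : b = K⁻¹
    · subst hb
      rw [if_pos rfl]
      simp only [hKinv, sub_self]
      rw [hG0]
      simp only [MulChar.map_zero]
      ring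
    · rw [if_neg hb, add_zero, inner (1 - K * b) (hbK b hb)]
  rw [Finset.sum_congr rfl fun b _ => hsplit b, Finset.sum_add_distrib,
    Finset.sum_ite_eq' Finset.univ K⁻¹
      (fun _ => (1 + ψ K⁻¹ + (ψ ^ 2) K⁻¹) * ((ψ K + (ψ ^ 2) K) * ((p : ℂ) - 1))),
    if_pos (Finset.mem_univ _), houter]
  rw [hp2 K, hp2 K⁻¹, hai]
  linear_combination (ψ K - ψ K * jacobiSum ψ ψ + ψ K ^ 3
      + 2 * ψ K ^ 3 * jacobiSum ψ ψ * jacobiSum (ψ ^ 2) (ψ ^ 2)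
      + ψ K ^ 5 - ψ K ^ 5 * jacobiSum (ψ ^ 2) (ψ ^ 2)
      + 2 * (p : ℂ) + ψ K ^ 2 * (p : ℂ) + ψ K ^ 3 * (p : ℂ)
      + 2 * jacobiSum ψ ψ * jacobiSum (ψ ^ 2) (ψ ^ 2)
      - ψ K ^ 2 * jacobiSum (ψ ^ 2) (ψ ^ 2)) * ha3
    + 2 * hJJ

private lemma main2 (k : ℕ) (hk : (k : ZMod p) ≠ 0)
    (ψ : MulChar (ZMod p) ℂ) (hψ : orderOf ψ = 3) :
    (nuCount k p : ℂ)
      = (p : ℂ) ^ 2 + 4 * p + (ψ (k : ZMod p) + (ψ ^ 2) (k : ZMod p)) * p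
        - jacobiSum ψ ψ * ψ (k : ZMod p)
        - jacobiSum (ψ ^ 2) (ψ ^ 2) * (ψ ^ 2) (k : ZMod p) := by
  have h1 : (nuCount k p : ℂ) = ∑ y : ZMod p, ∑ z : ZMod p,
      (((univ.filter fun x : ZMod p =>
        x ^ 3 = 1 - (k : ZMod p) * y ^ 3 - (k : ZMod p) * z ^ 3).card : ℕ) : ℂ) := by
    rw [nuCount_eq_sum k]
    push_cast
    rfl
  calc (nuCount k p : ℂ)
      = ∑ y : ZMod p, ∑ z : ZMod p,
          (1 + ψ (1 - (k : ZMod p) * y ^ 3 - (k : ZMod p) * z ^ 3)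
            + (ψ ^ 2) (1 - (k : ZMod p) * y ^ 3 - (k : ZMod p) * z ^ 3)) := by
        rw [h1]
        exact Finset.sum_congr rfl fun y _ => Finset.sum_congr rfl fun z _ =>
          count_cubes ψ hψ _
    _ = ∑ b : ZMod p, (1 + ψ b + (ψ ^ 2) b) * ∑ z : ZMod p,
          (1 + ψ (1 - (k : ZMod p) * b - (k : ZMod p) * z ^ 3)
            + (ψ ^ 2) (1 - (k : ZMod p) * b - (k : ZMod p) * z ^ 3)) :=
        sum_cubes ψ hψ (fun w => ∑ z : ZMod p,
          (1 + ψ (1 - (k : ZMod p) * w - (k : ZMod p) * z ^ 3)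
            + (ψ ^ 2) (1 - (k : ZMod p) * w - (k : ZMod p) * z ^ 3)))
    _ = ∑ b : ZMod p, (1 + ψ b + (ψ ^ 2) b) * ∑ c : ZMod p, (1 + ψ c + (ψ ^ 2) c) *
          (1 + ψ (1 - (k : ZMod p) * b - (k : ZMod p) * c)
            + (ψ ^ 2) (1 - (k : ZMod p) * b - (k : ZMod p) * c)) :=
        Finset.sum_congr rfl fun b _ =>
          congrArg (fun S => (1 + ψ b + (ψ ^ 2) b) * S)
            (sum_cubes ψ hψ (fun w =>
              1 + ψ (1 - (k : ZMod p) * b - (k : ZMod p) * w)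
                + (ψ ^ 2) (1 - (k : ZMod p) * b - (k : ZMod p) * w)))
    _ = _ := main_core (k : ZMod p) hk ψ hψ

end Aux

theorem statement10 (k : ℕ) (hk : 1 ≤ k) (p : ℕ) [Fact p.Prime]
    (hp : ¬ p ∣ 3 * k) :
    (p % 3 = 2 → nuCount k p = p ^ 2) ∧
    (p % 3 = 1 → ∀ ψ : MulChar (ZMod p) ℂ, orderOf ψ = 3 →
      (nuCount k p : ℝ)
        = p ^ 2
          + (4 + (if (k : ZMod p) ^ ((p - 1) / 3) = 1 then (2 : ℝ) else -1)) * p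
          - 2 * ((∑ u : ZMod p, ψ u * ψ (1 - u)) * ψ (k : ZMod p)).re) := by
  constructor
  · intro h2
    exact part1 k h2
  · intro hp3 ψ hψ
    have hk0 : (k : ZMod p) ≠ 0 := by
      intro h
      exact hp (Dvd.dvd.mul_left ((ZMod.natCast_eq_zero_iff k p).mp h) 3)
    have h3 : (3 : ℕ) ∣ p - 1 := by
      have := MulChar.orderOf_dvd_card_sub_one (ZMod p) ψ
      rwa [hψ, ZMod.card] at this
    have hψ3 : ψ ^ 3 = 1 := hψ ▸ pow_orderOf_eq_one ψ
    have hinv : ψ ^ 2 = ψ⁻¹ := by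
      apply eq_inv_of_mul_eq_one_left
      rw [← pow_succ]
      exact hψ3
    have hKu : IsUnit (k : ZMod p) := isUnit_iff_ne_zero.mpr hk0
    have ha3 : ψ (k : ZMod p) ^ 3 = 1 := by
      rw [← MulChar.pow_apply' ψ three_ne_zero, hψ3, MulChar.one_apply hKu]
    have hp2K : (ψ ^ 2) (k : ZMod p) = ψ (k : ZMod p) ^ 2 :=
      MulChar.pow_apply' ψ two_ne_zero _
    have hconj : (starRingEnd ℂ) (ψ (k : ZMod p)) = (ψ ^ 2) (k : ZMod p) := by
      rw [hinv]
      exact MulChar.star_apply' ψ _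
    have hconjJ : (starRingEnd ℂ) (jacobiSum ψ ψ) = jacobiSum (ψ ^ 2) (ψ ^ 2) := by
      rw [hinv, jacobiSum, jacobiSum, map_sum]
      refine Finset.sum_congr rfl fun u _ => ?_
      rw [map_mul]
      rw [← MulChar.star_apply' ψ u, ← MulChar.star_apply' ψ (1 - u)]
      rfl
    have hcond : ((k : ZMod p) ^ ((p - 1) / 3) = 1) ↔ ψ (k : ZMod p) = 1 :=
      (euler_iff h3 hk0).trans (cube_iff ψ hψ hk0).symm
    have hmain := main2 k hk0 ψ hψ
    have hsum_c : ψ (k : ZMod p) + (ψ ^ 2) (k : ZMod p)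
        = (((if (k : ZMod p) ^ ((p - 1) / 3) = 1 then (2 : ℝ) else -1) : ℝ) : ℂ) := by
      by_cases hc : (k : ZMod p) ^ ((p - 1) / 3) = 1
      · rw [if_pos hc, hp2K, hcond.mp hc]
        norm_num
      · rw [if_neg hc, hp2K]
        have hne : ψ (k : ZMod p) ≠ 1 := fun h => hc (hcond.mpr h)
        have hz : (ψ (k : ZMod p) - 1)
            * (1 + ψ (k : ZMod p) + ψ (k : ZMod p) ^ 2) = 0 := by
          linear_combination ha3
        rcases mul_eq_zero.mp hz with h | h
        · exact absurd (by linear_combination h) hne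
        · push_cast
          linear_combination h
    have h2re : jacobiSum ψ ψ * ψ (k : ZMod p)
          + (starRingEnd ℂ) (jacobiSum ψ ψ * ψ (k : ZMod p))
        = ((2 * (jacobiSum ψ ψ * ψ (k : ZMod p)).re : ℝ) : ℂ) :=
      Complex.add_conj _
    have hconjprod : jacobiSum (ψ ^ 2) (ψ ^ 2) * (ψ ^ 2) (k : ZMod p)
        = (starRingEnd ℂ) (jacobiSum ψ ψ * ψ (k : ZMod p)) := by
      rw [map_mul, hconj, hconjJ]
    have hJdef : (∑ u : ZMod p, ψ u * ψ (1 - u)) = jacobiSum ψ ψ := rfl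
    have hfinal : (nuCount k p : ℂ)
        = ((((p : ℝ) ^ 2
            + (4 + (if (k : ZMod p) ^ ((p - 1) / 3) = 1 then (2 : ℝ) else -1)) * p
            - 2 * ((∑ u : ZMod p, ψ u * ψ (1 - u)) * ψ (k : ZMod p)).re) : ℝ) : ℂ) := by
      rw [hmain, hconjprod, hJdef]
      push_cast
      push_cast at h2re hsum_c
      linear_combination ((p : ℂ)) * hsum_c - h2re
    have hre := congrArg Complex.re hfinal
    rw [Complex.ofReal_re, Complex.natCast_re] at hre
    exact hre
end

section
/- Let a, b, c, d be integers and let p be a prime not dividing 2abcd(d² − 4abc). Set ν(p) = #{(x,y,z) ∈ 𝔽_p³ : a x² + b y² + c z² − d xyz = 1}. Then ν(p) = p² + p · ((d² − 4abc)/p) · ( 1 + (a/p) + (b/p) + (c/p) ) + 1, where (m/p) denotes the Legendre symbol. -/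
open Finset

variable {F : Type*} [Field F] [Fintype F] [DecidableEq F]

local notation "χ" => quadraticChar F

lemma card_sq_filter (hF : ringChar F ≠ 2) (t : F) :
    (({x : F | x ^ 2 = t} : Set F).toFinset.card : ℤ) = χ t + 1 :=
  quadraticChar_card_sqrts hF t

lemma card_sq_filter' (hF : ringChar F ≠ 2) (t : F) :
    ((univ.filter fun y : F => y ^ 2 = t).card : ℤ) = χ t + 1 := by
  have := quadraticChar_card_sqrts hF t
  rwa [Set.toFinset_setOf] at this

lemma sum_affine_s11 (hF : ringChar F ≠ 2) (A C : F) (hA : A ≠ 0) :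
    ∑ t : F, χ (A * t + C) = 0 := by
  have hbij : Function.Bijective (fun t : F => A * t + C) := by
    refine Finite.injective_iff_bijective.mp fun x y h => ?_
    exact mul_left_cancel₀ hA (add_right_cancel h)
  rw [Fintype.sum_bijective _ hbij _ (fun u => χ u) (fun t => rfl)]
  exact quadraticChar_sum_zero hF

lemma sum_sq_char (hF : ringChar F ≠ 2) :
    ∑ t : F, χ (t * t) = (Fintype.card F : ℤ) - 1 := by
  have h : ∀ t : F, χ (t * t) = if t = 0 then 0 else 1 := by
    intro t
    by_cases ht : t = 0
    · simp [ht]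
    · rw [if_neg ht, map_mul, ← sq, quadraticChar_sq_one ht]
  rw [Finset.sum_congr rfl fun t _ => h t, Finset.sum_ite, Finset.sum_const, Finset.sum_const]
  simp only [smul_zero, zero_add, nsmul_eq_mul, mul_one]
  rw [Finset.filter_ne', Finset.card_erase_of_mem (mem_univ 0)]
  have : 0 < Fintype.card F := Fintype.card_pos
  push_cast [Finset.card_univ]
  omega

lemma sum_shift (hF : ringChar F ≠ 2) (E : F) (hE : E ≠ 0) :
    ∑ t : F, χ (t * (t + E)) = -1 := by
  rw [← Finset.sum_erase (univ : Finset F) (f := fun t => χ (t * (t + E))) (a := 0) (by simp)]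
  have key : ∑ t ∈ (univ : Finset F).erase 0, χ (t * (t + E))
      = ∑ u ∈ (univ : Finset F).erase 1, χ u := by
    refine Finset.sum_nbij' (i := fun t => 1 + E * t⁻¹) (j := fun u => E * (u - 1)⁻¹)
      ?_ ?_ ?_ ?_ ?_
    · intro t ht
      simp only [mem_erase, mem_univ, and_true] at ht ⊢
      intro h
      have h0 : E * t⁻¹ = 0 := by linear_combination h
      exact hE (by
        rcases mul_eq_zero.mp h0 with h' | h'
        · exact h'
        · exact absurd (inv_eq_zero.mp h') ht)
    · intro u hu
      simp only [mem_erase, mem_univ, and_true] at hu ⊢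
      exact mul_ne_zero hE (inv_ne_zero (sub_ne_zero.mpr hu))
    · intro t ht
      simp only [mem_erase, mem_univ, and_true] at ht
      field_simp
      simp [hE]
    · intro u hu
      simp only [mem_erase, mem_univ, and_true] at hu
      have : u - 1 ≠ 0 := sub_ne_zero.mpr hu
      field_simp
      ring
    · intro t ht
      simp only [mem_erase, mem_univ, and_true] at ht
      have h1 : t * (t + E) = t ^ 2 * (1 + E * t⁻¹) := by field_simp
      rw [h1, map_mul, quadraticChar_sq_one' ht, one_mul]
  rw [key, Finset.sum_erase_eq_sub (mem_univ 1), quadraticChar_sum_zero hF, map_one]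
  ring

lemma sum_quad (hF : ringChar F ≠ 2) (A C : F) (hA : A ≠ 0) :
    ∑ y : F, χ (A * y ^ 2 + C)
      = χ A * (if C = 0 then (Fintype.card F : ℤ) - 1 else -1) := by
  have step1 : ∑ y : F, χ (A * y ^ 2 + C)
      = ∑ t : F, (χ t + 1) * χ (A * t + C) := by
    rw [← Finset.sum_fiberwise' univ (fun y : F => y ^ 2) (fun t => χ (A * t + C))]
    refine Finset.sum_congr rfl fun t _ => ?_
    rw [Finset.sum_const, nsmul_eq_mul]
    rw_mod_cast [card_sq_filter' hF t]
  rw [step1]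
  have step2 : ∀ t : F, (χ t + 1) * χ (A * t + C)
      = χ A * χ (t * (t + C * A⁻¹)) + χ (A * t + C) := by
    intro t
    have hac : A * (C * A⁻¹) = C := by field_simp
    have h1 : t * (A * t + C) = A * (t * (t + C * A⁻¹)) := by linear_combination (-t) * hac
    rw [add_mul, one_mul, ← map_mul, h1, map_mul]
  rw [Finset.sum_congr rfl fun t _ => step2 t, Finset.sum_add_distrib,
    sum_affine_s11 hF A C hA, add_zero, ← Finset.mul_sum]
  congr 1
  by_cases hC : C = 0
  · rw [if_pos hC, hC]
    simp only [zero_mul, add_zero]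
    exact sum_sq_char hF
  · rw [if_neg hC]
    exact sum_shift hF _ (mul_ne_zero hC (inv_ne_zero hA))

lemma count_roots (hF : ringChar F ≠ 2) (A B C : F) (hA : A ≠ 0) :
    ((univ.filter fun z : F => A * z ^ 2 + B * z + C = 0).card : ℤ)
      = 1 + χ (B ^ 2 - 4 * A * C) := by
  have h2 : (2 : F) ≠ 0 := Ring.two_ne_zero hF
  have h2A : (2 : F) * A ≠ 0 := mul_ne_zero h2 hA
  have key : (univ.filter fun z : F => A * z ^ 2 + B * z + C = 0).card
      = (univ.filter fun w : F => w ^ 2 = B ^ 2 - 4 * A * C).card := by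
    refine Finset.card_nbij' (i := fun z => 2 * A * z + B)
      (j := fun w => (2 * A)⁻¹ * (w - B)) ?_ ?_ ?_ ?_
    · intro z hz
      simp only [Finset.mem_coe, mem_filter, mem_univ, true_and] at hz ⊢
      linear_combination 4 * A * hz
    · intro w hw
      simp only [Finset.mem_coe, mem_filter, mem_univ, true_and] at hw ⊢
      field_simp
      linear_combination hw
    · intro z hz
      field_simp
      ring
    · intro w hw
      field_simp
      ring
  rw [key, card_sq_filter' hF]
  ring

lemma card_scaled (hF : ringChar F ≠ 2) (u t : F) (hu : u ≠ 0) :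
    ((univ.filter fun x : F => (u * x) ^ 2 = t).card : ℤ) = 1 + χ t := by
  have key : (univ.filter fun x : F => (u * x) ^ 2 = t).card
      = (univ.filter fun w : F => w ^ 2 = t).card := by
    refine Finset.card_nbij' (i := fun x => u * x) (j := fun w => u⁻¹ * w) ?_ ?_ ?_ ?_
    · intro z hz
      simpa using hz
    · intro w hw
      simp only [Finset.mem_coe, mem_filter, mem_univ, true_and] at hw ⊢
      field_simp
      linear_combination hw
    · intro z hz
      field_simp
    · intro w hw
      field_simp
  rw [key, card_sq_filter' hF]
  ring

/-- The number of solutions of `a x² + b y² + c z² − d xyz = 1` in `𝔽_p³`. -/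
noncomputable def nuBU (a b c d : ℤ) (p : ℕ) : ℕ :=
  Nat.card {v : ZMod p × ZMod p × ZMod p //
    (a : ZMod p) * v.1 ^ 2 + (b : ZMod p) * v.2.1 ^ 2 + (c : ZMod p) * v.2.2 ^ 2
      - (d : ZMod p) * v.1 * v.2.1 * v.2.2 = 1}

theorem statement11 (a b c d : ℤ) (p : ℕ) [Fact p.Prime]
    (hp : ¬ (p : ℤ) ∣ 2 * a * b * c * d * (d ^ 2 - 4 * a * b * c)) :
    (nuBU a b c d p : ℤ)
      = p ^ 2
        + p * legendreSym p (d ^ 2 - 4 * a * b * c)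
            * (1 + legendreSym p a + legendreSym p b + legendreSym p c)
        + 1 := by
  have hp2 : ¬ (p:ℤ) ∣ 2 := fun h =>
    hp (((((h.mul_right a).mul_right b).mul_right c).mul_right d).mul_right _)
  have hpa : ¬ (p:ℤ) ∣ a := fun h =>
    hp (((((h.mul_left 2).mul_right b).mul_right c).mul_right d).mul_right _)
  have hpb : ¬ (p:ℤ) ∣ b := fun h =>
    hp ((((h.mul_left (2*a)).mul_right c).mul_right d).mul_right _)
  have hpc : ¬ (p:ℤ) ∣ c := fun h =>
    hp (((h.mul_left (2*a*b)).mul_right d).mul_right _)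
  have hpd : ¬ (p:ℤ) ∣ d := fun h =>
    hp ((h.mul_left (2*a*b*c)).mul_right _)
  have hpD : ¬ (p:ℤ) ∣ (d^2 - 4*a*b*c) := fun h => hp (h.mul_left _)
  have hF : ringChar (ZMod p) ≠ 2 := by
    rw [ZMod.ringChar_zmod_n]
    rintro rfl
    exact hp2 (by norm_num)
  have ha0 : (a : ZMod p) ≠ 0 := fun h => hpa ((ZMod.intCast_zmod_eq_zero_iff_dvd a p).mp h)
  have hb0 : (b : ZMod p) ≠ 0 := fun h => hpb ((ZMod.intCast_zmod_eq_zero_iff_dvd b p).mp h)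
  have hc0 : (c : ZMod p) ≠ 0 := fun h => hpc ((ZMod.intCast_zmod_eq_zero_iff_dvd c p).mp h)
  have hd0 : (d : ZMod p) ≠ 0 := fun h => hpd ((ZMod.intCast_zmod_eq_zero_iff_dvd d p).mp h)
  have hD0 : ((d:ZMod p)^2 - 4*(a:ZMod p)*(b:ZMod p)*(c:ZMod p)) ≠ 0 := by
    intro h
    apply hpD
    rw [← ZMod.intCast_zmod_eq_zero_iff_dvd]
    push_cast
    exact h
  have h20 : (2 : ZMod p) ≠ 0 := Ring.two_ne_zero hF
  have h40 : (4 : ZMod p) ≠ 0 := by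
    have h4 : (4 : ZMod p) = 2 * 2 := by norm_num
    rw [h4]; exact mul_ne_zero h20 h20
  set DF : ZMod p := (d:ZMod p)^2 - 4*(a:ZMod p)*(b:ZMod p)*(c:ZMod p) with hDF_def
  -- step 1: the count as a triple sum
  have hcard : (nuBU a b c d p : ℤ)
      = ∑ x : ZMod p, ∑ y : ZMod p, ∑ z : ZMod p,
          (if (a:ZMod p)*x^2 + (b:ZMod p)*y^2 + (c:ZMod p)*z^2 - (d:ZMod p)*x*y*z = 1
            then (1:ℤ) else 0) := by
    rw [nuBU, Nat.card_eq_fintype_card, Fintype.card_subtype]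
    push_cast [Finset.card_filter]
    rw [Fintype.sum_prod_type]
    refine Finset.sum_congr rfl fun x _ => ?_
    rw [Fintype.sum_prod_type]
  -- step 2: the inner sum over z
  have hz : ∀ x y : ZMod p,
      (∑ z : ZMod p, if (a:ZMod p)*x^2 + (b:ZMod p)*y^2 + (c:ZMod p)*z^2
          - (d:ZMod p)*x*y*z = 1 then (1:ℤ) else 0)
      = 1 + quadraticChar (ZMod p)
          (((d:ZMod p)^2*x^2 - 4*(b:ZMod p)*(c:ZMod p)) * y^2
            + ((4:ZMod p)*(c:ZMod p) - 4*(a:ZMod p)*(c:ZMod p)*x^2)) := by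
    intro x y
    rw [Finset.sum_boole]
    have hpred : (univ.filter fun z : ZMod p =>
        (a:ZMod p)*x^2 + (b:ZMod p)*y^2 + (c:ZMod p)*z^2 - (d:ZMod p)*x*y*z = 1)
        = (univ.filter fun z : ZMod p =>
          (c:ZMod p)*z^2 + (-((d:ZMod p)*x*y))*z + ((a:ZMod p)*x^2 + (b:ZMod p)*y^2 - 1) = 0) := by
      refine Finset.filter_congr fun z _ =>
        ⟨fun h => by linear_combination h, fun h => by linear_combination h⟩
    rw [hpred, count_roots hF _ _ _ hc0]
    congr 2
    ring
  -- step 3: the sum over y, pointwise in x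
  have hI : ∀ x : ZMod p,
      ∑ y : ZMod p, quadraticChar (ZMod p)
          (((d:ZMod p)^2*x^2 - 4*(b:ZMod p)*(c:ZMod p)) * y^2
            + ((4:ZMod p)*(c:ZMod p) - 4*(a:ZMod p)*(c:ZMod p)*x^2))
      = (p:ℤ) * quadraticChar (ZMod p) (c:ZMod p) * quadraticChar (ZMod p) DF
          * (if (d:ZMod p)^2*x^2 - 4*(b:ZMod p)*(c:ZMod p) = 0 then 1 else 0)
        + (p:ℤ) * quadraticChar (ZMod p) (a:ZMod p) * quadraticChar (ZMod p) DF
          * (if (4:ZMod p)*(c:ZMod p) - 4*(a:ZMod p)*(c:ZMod p)*x^2 = 0 then 1 else 0)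
        - quadraticChar (ZMod p) ((d:ZMod p)^2*x^2 - 4*(b:ZMod p)*(c:ZMod p)) := by
    intro x
    by_cases hAx : (d:ZMod p)^2*x^2 - 4*(b:ZMod p)*(c:ZMod p) = 0
    · have hCx : (4:ZMod p)*(c:ZMod p) - 4*(a:ZMod p)*(c:ZMod p)*x^2 ≠ 0 := by
        intro h
        apply mul_ne_zero (mul_ne_zero h40 hc0) hD0
        rw [hDF_def]
        linear_combination (d:ZMod p)^2 * h + 4*(a:ZMod p)*(c:ZMod p) * hAx
      have hsum : ∑ y : ZMod p, quadraticChar (ZMod p)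
          (((d:ZMod p)^2*x^2 - 4*(b:ZMod p)*(c:ZMod p)) * y^2
            + ((4:ZMod p)*(c:ZMod p) - 4*(a:ZMod p)*(c:ZMod p)*x^2))
          = (p:ℤ) * quadraticChar (ZMod p)
              ((4:ZMod p)*(c:ZMod p) - 4*(a:ZMod p)*(c:ZMod p)*x^2) := by
        rw [Finset.sum_congr rfl fun y _ => by rw [hAx, zero_mul, zero_add]]
        rw [Finset.sum_const, nsmul_eq_mul, Finset.card_univ, ZMod.card]
      have harg : (4:ZMod p)*(c:ZMod p) - 4*(a:ZMod p)*(c:ZMod p)*x^2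
          = ((2:ZMod p)*(d:ZMod p)⁻¹)^2 * ((c:ZMod p) * DF) := by
        rw [hDF_def]
        field_simp
        linear_combination (-4*(a:ZMod p)) * hAx
      have hchi : quadraticChar (ZMod p)
            ((4:ZMod p)*(c:ZMod p) - 4*(a:ZMod p)*(c:ZMod p)*x^2)
          = quadraticChar (ZMod p) (c:ZMod p) * quadraticChar (ZMod p) DF := by
        rw [harg, map_mul, quadraticChar_sq_one' (mul_ne_zero h20 (inv_ne_zero hd0)),
          one_mul, map_mul]
      rw [hsum, hchi, if_pos hAx, if_neg hCx, hAx]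
      simp only [MulChar.map_zero, map_zero, mul_one, mul_zero, sub_zero]
      ring
    · rw [sum_quad hF _ _ hAx, if_neg hAx]
      by_cases hCx : (4:ZMod p)*(c:ZMod p) - 4*(a:ZMod p)*(c:ZMod p)*x^2 = 0
      · have key : (a:ZMod p) * ((d:ZMod p)^2*x^2 - 4*(b:ZMod p)*(c:ZMod p)) = DF := by
          apply mul_left_cancel₀ (mul_ne_zero h40 hc0)
          rw [hDF_def]
          linear_combination (-(d:ZMod p)^2) * hCx
        have hchi : quadraticChar (ZMod p) ((d:ZMod p)^2*x^2 - 4*(b:ZMod p)*(c:ZMod p))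
            = quadraticChar (ZMod p) (a:ZMod p) * quadraticChar (ZMod p) DF := by
          have h1 : quadraticChar (ZMod p) (a:ZMod p)
              * quadraticChar (ZMod p) ((d:ZMod p)^2*x^2 - 4*(b:ZMod p)*(c:ZMod p))
              = quadraticChar (ZMod p) DF := by rw [← map_mul, key]
          have h2 : quadraticChar (ZMod p) (a:ZMod p) ^ 2 = 1 := quadraticChar_sq_one ha0
          linear_combination (quadraticChar (ZMod p) (a:ZMod p)) * h1
            - (quadraticChar (ZMod p) ((d:ZMod p)^2*x^2 - 4*(b:ZMod p)*(c:ZMod p))) * h2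
        rw [if_pos hCx, if_pos hCx, hchi, ZMod.card]
        ring
      · rw [if_neg hCx, if_neg hCx]
        ring
  -- counts of special fibers in x
  have hAcount : (∑ x : ZMod p,
      if (d:ZMod p)^2*x^2 - 4*(b:ZMod p)*(c:ZMod p) = 0 then (1:ℤ) else 0)
      = 1 + quadraticChar (ZMod p) (b:ZMod p) * quadraticChar (ZMod p) (c:ZMod p) := by
    rw [Finset.sum_boole]
    have hpred : (univ.filter fun x : ZMod p =>
        (d:ZMod p)^2*x^2 - 4*(b:ZMod p)*(c:ZMod p) = 0)
        = univ.filter fun x : ZMod p => ((d:ZMod p)*x)^2 = 4*(b:ZMod p)*(c:ZMod p) := by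
      refine Finset.filter_congr fun x _ =>
        ⟨fun h => by linear_combination h, fun h => by linear_combination h⟩
    rw [hpred, card_scaled hF _ _ hd0]
    have h4bc : (4:ZMod p)*(b:ZMod p)*(c:ZMod p)
        = (2:ZMod p)^2 * ((b:ZMod p)*(c:ZMod p)) := by ring
    rw [h4bc, map_mul, quadraticChar_sq_one' h20, one_mul, map_mul]
  have hCcount : (∑ x : ZMod p,
      if (4:ZMod p)*(c:ZMod p) - 4*(a:ZMod p)*(c:ZMod p)*x^2 = 0 then (1:ℤ) else 0)
      = 1 + quadraticChar (ZMod p) (a:ZMod p) := by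
    rw [Finset.sum_boole]
    have hpred : (univ.filter fun x : ZMod p =>
        (4:ZMod p)*(c:ZMod p) - 4*(a:ZMod p)*(c:ZMod p)*x^2 = 0)
        = univ.filter fun x : ZMod p => ((a:ZMod p)*x)^2 = (a:ZMod p) := by
      refine Finset.filter_congr fun x _ => ⟨?_, ?_⟩
      · intro h
        have h1 : (4:ZMod p)*(c:ZMod p) * (1 - (a:ZMod p)*x^2) = 0 := by linear_combination h
        have h2 : (1:ZMod p) - (a:ZMod p)*x^2 = 0 :=
          (mul_eq_zero.mp h1).resolve_left (mul_ne_zero h40 hc0)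
        linear_combination (-(a:ZMod p)) * h2
      · intro h
        have h1 : (a:ZMod p) * ((a:ZMod p)*x^2 - 1) = 0 := by linear_combination h
        have h2 : (a:ZMod p)*x^2 - 1 = 0 := (mul_eq_zero.mp h1).resolve_left ha0
        linear_combination (-4*(c:ZMod p)) * h2
    rw [hpred, card_scaled hF _ _ ha0]
  have hAsum : ∑ x : ZMod p,
      quadraticChar (ZMod p) ((d:ZMod p)^2*x^2 - 4*(b:ZMod p)*(c:ZMod p)) = -1 := by
    have he : ∀ x : ZMod p, (d:ZMod p)^2*x^2 - 4*(b:ZMod p)*(c:ZMod p)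
        = (d:ZMod p)^2*x^2 + (-(4*(b:ZMod p)*(c:ZMod p))) := fun x => by ring
    rw [Finset.sum_congr rfl fun x _ => by rw [he x]]
    rw [sum_quad hF _ _ (pow_ne_zero 2 hd0)]
    rw [if_neg (neg_ne_zero.mpr (mul_ne_zero (mul_ne_zero h40 hb0) hc0))]
    rw [quadraticChar_sq_one' hd0]
    ring
  -- put everything together
  have sa : quadraticChar (ZMod p) (a:ZMod p) ^ 2 = 1 := quadraticChar_sq_one ha0
  have sc : quadraticChar (ZMod p) (c:ZMod p) ^ 2 = 1 := quadraticChar_sq_one hc0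
  have hfinal : (nuBU a b c d p : ℤ)
      = (p:ℤ)*p
        + ((p:ℤ) * quadraticChar (ZMod p) (c:ZMod p) * quadraticChar (ZMod p) DF
            * (1 + quadraticChar (ZMod p) (b:ZMod p) * quadraticChar (ZMod p) (c:ZMod p))
          + (p:ℤ) * quadraticChar (ZMod p) (a:ZMod p) * quadraticChar (ZMod p) DF
            * (1 + quadraticChar (ZMod p) (a:ZMod p))
          - (-1)) := by
    rw [hcard]
    rw [Finset.sum_congr rfl fun x _ => Finset.sum_congr rfl fun y _ => hz x y]
    rw [Finset.sum_congr rfl fun x _ => by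
      rw [Finset.sum_add_distrib, Finset.sum_const, Finset.card_univ, ZMod.card,
        nsmul_eq_mul, mul_one, hI x]]
    rw [Finset.sum_add_distrib, Finset.sum_const, Finset.card_univ, ZMod.card,
      nsmul_eq_mul]
    congr 1
    rw [Finset.sum_sub_distrib, Finset.sum_add_distrib, ← Finset.mul_sum, ← Finset.mul_sum,
      hAcount, hCcount, hAsum]
  rw [hfinal]
  simp only [legendreSym]
  push_cast
  rw [← hDF_def]
  linear_combination ((p:ℤ) * quadraticChar (ZMod p) DF * quadraticChar (ZMod p) (b:ZMod p)) * sc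
    + ((p:ℤ) * quadraticChar (ZMod p) DF) * sa
end

section
/- Let (a,b,c,d) be one of the tuples (1,5,5,5), (1,3,6,6), (2,7,14,14), (2,2,3,6), (6,10,15,30), (1,2,2,2), and set f(x,y,z) = a x² + b y² + c z² − d xyz − 1. Then for every integer k ≥ 3, the image of the reduction map { P ∈ ℤ₂³ : f(P) = 0 } → { P ∈ (ℤ/2^kℤ)³ : f(P) ≡ 0 (mod 2^k) } consists of exactly half of the solutions modulo 2^k; that is, 2 · #(image) = #{ P ∈ (ℤ/2^kℤ)³ : f(P) ≡ 0 (mod 2^k) }. In particular the reduction map is not surjective. -/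
set_option maxRecDepth 40000


open PadicInt

/-- Solutions of `f(P) ≡ 0 (mod 2^k)` for `f = ax² + by² + cz² − dxyz − 1`. -/
def solsMod (a b c d : ℤ) (k : ℕ) : Set (ZMod (2 ^ k) × ZMod (2 ^ k) × ZMod (2 ^ k)) :=
  {v | (a : ZMod (2 ^ k)) * v.1 ^ 2 + (b : ZMod (2 ^ k)) * v.2.1 ^ 2
        + (c : ZMod (2 ^ k)) * v.2.2 ^ 2
        - (d : ZMod (2 ^ k)) * v.1 * v.2.1 * v.2.2 - 1 = 0}

/-- The image, modulo `2^k`, of the set of 2-adic solutions of `f(P) = 0`. -/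
def solsImage (a b c d : ℤ) (k : ℕ) :
    Set (ZMod (2 ^ k) × ZMod (2 ^ k) × ZMod (2 ^ k)) :=
  {v | ∃ w : ℤ_[2] × ℤ_[2] × ℤ_[2],
    (a : ℤ_[2]) * w.1 ^ 2 + (b : ℤ_[2]) * w.2.1 ^ 2 + (c : ℤ_[2]) * w.2.2 ^ 2
        - (d : ℤ_[2]) * w.1 * w.2.1 * w.2.2 - 1 = 0 ∧
    PadicInt.toZModPow k w.1 = v.1 ∧ PadicInt.toZModPow k w.2.1 = v.2.1 ∧
    PadicInt.toZModPow k w.2.2 = v.2.2}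

namespace St12

instance instNZ (k : ℕ) : NeZero ((2:ℕ)^k) := ⟨pow_ne_zero _ (by norm_num)⟩

def Fint (a b c d x y z : ℤ) : ℤ := a*x^2 + b*y^2 + c*z^2 - d*x*y*z - 1

/-- canonical-lift condition defining the image set -/
def Tset (a b c d : ℤ) (k : ℕ) : Set (ZMod (2 ^ k) × ZMod (2 ^ k) × ZMod (2 ^ k)) :=
  {v | ((Fint a b c d v.1.val v.2.1.val v.2.2.val : ℤ) : ZMod (2 ^ (k+1))) = 0}

instance (a b c d : ℤ) (k : ℕ) : DecidablePred (· ∈ solsMod a b c d k) := by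
  unfold solsMod; intro v; infer_instance

instance (a b c d : ℤ) (k : ℕ) : DecidablePred (· ∈ Tset a b c d k) := by
  unfold Tset; intro v; infer_instance

lemma card_glue {α : Type*} [Fintype α] (s : Set α) [DecidablePred (· ∈ s)] :
    Nat.card s = s.toFinset.card := by
  rw [Nat.card_eq_fintype_card, Set.toFinset_card]

lemma mem_solsMod_iff {a b c d : ℤ} {k : ℕ} (v : ZMod (2^k) × ZMod (2^k) × ZMod (2^k)) :
    v ∈ solsMod a b c d k ↔ (2:ℤ)^k ∣ Fint a b c d v.1.val v.2.1.val v.2.2.val := by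
  have key : ((Fint a b c d (v.1.val) (v.2.1.val) (v.2.2.val) : ℤ) : ZMod (2^k))
      = (a : ZMod (2 ^ k)) * v.1 ^ 2 + (b : ZMod (2 ^ k)) * v.2.1 ^ 2
        + (c : ZMod (2 ^ k)) * v.2.2 ^ 2
        - (d : ZMod (2 ^ k)) * v.1 * v.2.1 * v.2.2 - 1 := by
    unfold Fint
    push_cast [ZMod.natCast_val, ZMod.cast_id]
    ring
  have : v ∈ solsMod a b c d k ↔ ((Fint a b c d (v.1.val) (v.2.1.val) (v.2.2.val) : ℤ) : ZMod (2^k)) = 0 := by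
    rw [key]; rfl
  rw [this, ZMod.intCast_zmod_eq_zero_iff_dvd]
  norm_num

lemma mem_Tset_iff {a b c d : ℤ} {k : ℕ} (v : ZMod (2^k) × ZMod (2^k) × ZMod (2^k)) :
    v ∈ Tset a b c d k ↔ (2:ℤ)^(k+1) ∣ Fint a b c d v.1.val v.2.1.val v.2.2.val := by
  have : v ∈ Tset a b c d k ↔ ((Fint a b c d (v.1.val) (v.2.1.val) (v.2.2.val) : ℤ) : ZMod (2^(k+1))) = 0 := Iff.rfl
  rw [this, ZMod.intCast_zmod_eq_zero_iff_dvd]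
  norm_num

lemma Tset_subset {a b c d : ℤ} {k : ℕ} : Tset a b c d k ⊆ solsMod a b c d k := by
  intro v hv
  rw [mem_Tset_iff] at hv
  rw [mem_solsMod_iff]
  exact dvd_trans (pow_dvd_pow 2 (Nat.le_succ k)) hv

/-- the master algebraic identity -/
lemma key_identity {a b c d : ℤ} (x y z s t u m1 m2 m3 : ℤ) {k : ℕ} (hk : 3 ≤ k)
    (h1 : 2*m1 = 2*a*x - d*y*z) (h2 : 2*m2 = 2*b*y - d*x*z) (h3 : 2*m3 = 2*c*z - d*x*y) :
    ∃ R : ℤ, Fint a b c d (x + 2^k*s) (y + 2^k*t) (z + 2^k*u)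
      = Fint a b c d x y z + 2^(k+1)*(m1*s + m2*t + m3*u) + 2^(k+2)*R := by
  obtain ⟨j, rfl⟩ : ∃ j, k = 3 + j := ⟨k - 3, by omega⟩
  refine ⟨2^j*2*(a*s^2 + b*t^2 + c*u^2 - d*(x*t*u + y*s*u + z*s*t) - d*(8*2^j)*s*t*u), ?_⟩
  have hp : (2:ℤ)^(3+j) = 8*2^j := by rw [pow_add]; ring
  have hp1 : (2:ℤ)^(3+j+1) = 16*2^j := by rw [pow_add, pow_add]; ring
  have hp2 : (2:ℤ)^(3+j+2) = 32*2^j := by rw [pow_add, pow_add]; ring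
  rw [hp, hp1, hp2]
  unfold Fint
  linear_combination (-8*(2:ℤ)^j*s)*h1 + (-8*(2:ℤ)^j*t)*h2 + (-8*(2:ℤ)^j*u)*h3
end St12
namespace St12

def red {k : ℕ} (v : ZMod (2^(k+1)) × ZMod (2^(k+1)) × ZMod (2^(k+1))) :
    ZMod (2^k) × ZMod (2^k) × ZMod (2^k) :=
  (ZMod.castHom (pow_dvd_pow 2 (Nat.le_succ k)) (ZMod (2^k)) v.1,
   ZMod.castHom (pow_dvd_pow 2 (Nat.le_succ k)) (ZMod (2^k)) v.2.1,
   ZMod.castHom (pow_dvd_pow 2 (Nat.le_succ k)) (ZMod (2^k)) v.2.2)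

lemma val_red_comp {k : ℕ} (x : ZMod (2^(k+1))) :
    (ZMod.castHom (pow_dvd_pow 2 (Nat.le_succ k)) (ZMod (2^k)) x).val = x.val % 2^k := by
  conv_lhs => rw [← ZMod.natCast_zmod_val x]
  rw [map_natCast, ZMod.val_natCast]

lemma Fint_shift_dvd (a b c d x y z s t u : ℤ) (k : ℕ) :
    (2:ℤ)^k ∣ Fint a b c d (x + 2^k*s) (y + 2^k*t) (z + 2^k*u) - Fint a b c d x y z := by
  refine ⟨2*a*x*s + a*2^k*s^2 + 2*b*y*t + b*2^k*t^2 + 2*c*z*u + c*2^k*u^2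
    - d*(x*y*u + x*t*z + s*y*z) - d*2^k*(x*t*u + s*y*u + s*t*z) - d*2^(2*k)*s*t*u, ?_⟩
  unfold Fint
  have h2 : (2:ℤ)^(2*k) = 2^k * 2^k := by rw [two_mul, pow_add]
  rw [h2]; ring

/-- decomposition of a point in a fiber of `red` -/
lemma fiber_decomp {k : ℕ} {w : ZMod (2^(k+1)) × ZMod (2^(k+1)) × ZMod (2^(k+1))}
    {v : ZMod (2^k) × ZMod (2^k) × ZMod (2^k)} (hw : red w = v) :
    (w.1.val : ℤ) = (v.1.val : ℤ) + 2^k * ((w.1.val / 2^k : ℕ) : ℤ)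
    ∧ (w.2.1.val : ℤ) = (v.2.1.val : ℤ) + 2^k * ((w.2.1.val / 2^k : ℕ) : ℤ)
    ∧ (w.2.2.val : ℤ) = (v.2.2.val : ℤ) + 2^k * ((w.2.2.val / 2^k : ℕ) : ℤ) := by
  refine ⟨?_, ?_, ?_⟩
  · have h1 : v.1.val = w.1.val % 2^k := by rw [← hw]; exact (val_red_comp w.1)
    have h2 := Nat.mod_add_div w.1.val (2^k)
    rw [h1]; exact_mod_cast h2.symm
  · have h1 : v.2.1.val = w.2.1.val % 2^k := by rw [← hw]; exact (val_red_comp w.2.1)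
    have h2 := Nat.mod_add_div w.2.1.val (2^k)
    rw [h1]; exact_mod_cast h2.symm
  · have h1 : v.2.2.val = w.2.2.val % 2^k := by rw [← hw]; exact (val_red_comp w.2.2)
    have h2 := Nat.mod_add_div w.2.2.val (2^k)
    rw [h1]; exact_mod_cast h2.symm

section withH
variable {a b c d : ℤ}
  (hH1 : ∀ x y z : ℤ, (8:ℤ) ∣ Fint a b c d x y z →
      (2:ℤ) ∣ (2*a*x - d*y*z) ∧ (2:ℤ) ∣ (2*b*y - d*x*z) ∧ (2:ℤ) ∣ (2*c*z - d*x*y))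

include hH1

/-- master fiber lemma: if `red w = v` and `8 ∣ Fint(v)`, then
`Fint(w) = Fint(v) + 2^(k+1)*(linear) + 2^(k+2)*R`. -/
lemma fiber_key {k : ℕ} (hk : 3 ≤ k) {w : ZMod (2^(k+1)) × ZMod (2^(k+1)) × ZMod (2^(k+1))}
    {v : ZMod (2^k) × ZMod (2^k) × ZMod (2^k)} (hw : red w = v)
    (h8 : (8:ℤ) ∣ Fint a b c d v.1.val v.2.1.val v.2.2.val) :
    ∃ m1 m2 m3 R : ℤ, 2*m1 = 2*a*(v.1.val:ℤ) - d*(v.2.1.val:ℤ)*(v.2.2.val:ℤ)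
      ∧ 2*m2 = 2*b*(v.2.1.val:ℤ) - d*(v.1.val:ℤ)*(v.2.2.val:ℤ)
      ∧ 2*m3 = 2*c*(v.2.2.val:ℤ) - d*(v.1.val:ℤ)*(v.2.1.val:ℤ)
      ∧ Fint a b c d w.1.val w.2.1.val w.2.2.val
        = Fint a b c d v.1.val v.2.1.val v.2.2.val
          + 2^(k+1)*(m1*((w.1.val / 2^k : ℕ):ℤ) + m2*((w.2.1.val / 2^k : ℕ):ℤ)
            + m3*((w.2.2.val / 2^k : ℕ):ℤ)) + 2^(k+2)*R := by
  obtain ⟨hd1, hd2, hd3⟩ := hH1 _ _ _ h8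
  obtain ⟨m1, hm1⟩ := hd1; obtain ⟨m2, hm2⟩ := hd2; obtain ⟨m3, hm3⟩ := hd3
  obtain ⟨h1, h2, h3⟩ := fiber_decomp hw
  obtain ⟨R, hR⟩ := key_identity (a:=a) (b:=b) (c:=c) (d:=d)
    (v.1.val : ℤ) (v.2.1.val : ℤ) (v.2.2.val : ℤ)
    ((w.1.val / 2^k : ℕ) : ℤ) ((w.2.1.val / 2^k : ℕ) : ℤ) ((w.2.2.val / 2^k : ℕ) : ℤ)
    m1 m2 m3 hk hm1.symm hm2.symm hm3.symm
  exact ⟨m1, m2, m3, R, hm1.symm, hm2.symm, hm3.symm, by rw [h1, h2, h3, hR]⟩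

lemma fiber_mem_sols {k : ℕ} (hk : 3 ≤ k) {v : ZMod (2^k) × ZMod (2^k) × ZMod (2^k)}
    (hv : v ∈ Tset a b c d k) {w : ZMod (2^(k+1)) × ZMod (2^(k+1)) × ZMod (2^(k+1))}
    (hw : red w = v) : w ∈ solsMod a b c d (k+1) := by
  rw [mem_Tset_iff] at hv
  rw [mem_solsMod_iff]
  have h8 : (8:ℤ) ∣ Fint a b c d v.1.val v.2.1.val v.2.2.val :=
    dvd_trans (by rw [show ((8:ℤ) = 2^3) by norm_num]; exact pow_dvd_pow 2 (by omega)) hv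
  obtain ⟨m1, m2, m3, R, -, -, -, hR⟩ := fiber_key hH1 hk hw h8
  rw [hR]
  exact dvd_add (dvd_add hv (Dvd.intro _ rfl))
    (dvd_mul_of_dvd_left (pow_dvd_pow 2 (by omega)) R)

lemma red_mem_Tset {k : ℕ} (hk : 3 ≤ k) {w : ZMod (2^(k+1)) × ZMod (2^(k+1)) × ZMod (2^(k+1))}
    (hw : w ∈ solsMod a b c d (k+1)) : red w ∈ Tset a b c d k := by
  rw [mem_solsMod_iff] at hw
  rw [mem_Tset_iff]
  -- 8 divides Fint at the reduced point, via Fint_shift_dvd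
  obtain ⟨h1, h2, h3⟩ := fiber_decomp (v := red w) rfl
  have hdiff := Fint_shift_dvd a b c d ((red w).1.val) ((red w).2.1.val) ((red w).2.2.val)
    ((w.1.val / 2^k : ℕ) : ℤ) ((w.2.1.val / 2^k : ℕ) : ℤ) ((w.2.2.val / 2^k : ℕ) : ℤ) k
  rw [← h1, ← h2, ← h3] at hdiff
  have h8w : (8:ℤ) ∣ Fint a b c d w.1.val w.2.1.val w.2.2.val :=
    dvd_trans (by rw [show ((8:ℤ) = 2^3) by norm_num]; exact pow_dvd_pow 2 (by omega)) hw
  have h8k : (8:ℤ) ∣ (2:ℤ)^k := by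
    rw [show ((8:ℤ) = 2^3) by norm_num]; exact pow_dvd_pow 2 hk
  have h8 : (8:ℤ) ∣ Fint a b c d ((red w).1.val) ((red w).2.1.val) ((red w).2.2.val) := by
    have hs := dvd_sub h8w (dvd_trans h8k hdiff)
    have heq : Fint a b c d (w.1.val:ℤ) w.2.1.val w.2.2.val
        - (Fint a b c d (w.1.val:ℤ) w.2.1.val w.2.2.val
          - Fint a b c d ((red w).1.val:ℤ) ((red w).2.1.val) ((red w).2.2.val))
        = Fint a b c d ((red w).1.val:ℤ) ((red w).2.1.val) ((red w).2.2.val) := by ring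
    rwa [heq] at hs
  obtain ⟨m1, m2, m3, R, -, -, -, hR⟩ := fiber_key hH1 hk (w := w) rfl h8
  have : (2:ℤ)^(k+1) ∣ Fint a b c d ((red w).1.val) ((red w).2.1.val) ((red w).2.2.val)
      + 2^(k+1)*(m1*((w.1.val / 2^k : ℕ):ℤ) + m2*((w.2.1.val / 2^k : ℕ):ℤ)
        + m3*((w.2.2.val / 2^k : ℕ):ℤ)) + 2^(k+2)*R := by rw [← hR]; exact hw
  have hs := dvd_sub (dvd_sub this (dvd_mul_of_dvd_left
    (pow_dvd_pow 2 (Nat.le_succ (k+1)) : (2:ℤ)^(k+1) ∣ 2^(k+2)) R))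
    (Dvd.intro (m1*((w.1.val / 2^k : ℕ):ℤ) + m2*((w.2.1.val / 2^k : ℕ):ℤ)
      + m3*((w.2.2.val / 2^k : ℕ):ℤ)) rfl)
  have heq : Fint a b c d ((red w).1.val:ℤ) ((red w).2.1.val) ((red w).2.2.val)
        + 2^(k+1)*(m1*((w.1.val / 2^k : ℕ):ℤ) + m2*((w.2.1.val / 2^k : ℕ):ℤ)
          + m3*((w.2.2.val / 2^k : ℕ):ℤ)) + 2^(k+2)*R - 2^(k+2)*R
        - 2^(k+1)*(m1*((w.1.val / 2^k : ℕ):ℤ) + m2*((w.2.1.val / 2^k : ℕ):ℤ)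
          + m3*((w.2.2.val / 2^k : ℕ):ℤ))
      = Fint a b c d ((red w).1.val:ℤ) ((red w).2.1.val) ((red w).2.2.val) := by ring
  rwa [heq] at hs

end withH
end St12
namespace St12

/-- parametrization of the fiber of `red` over `v` -/
def gmap {k : ℕ} (v : ZMod (2^k) × ZMod (2^k) × ZMod (2^k)) (e : Fin 2 × Fin 2 × Fin 2) :
    ZMod (2^(k+1)) × ZMod (2^(k+1)) × ZMod (2^(k+1)) :=
  (((v.1.val + 2^k * e.1.val : ℕ) : ZMod (2^(k+1))),
   ((v.2.1.val + 2^k * e.2.1.val : ℕ) : ZMod (2^(k+1))),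
   ((v.2.2.val + 2^k * e.2.2.val : ℕ) : ZMod (2^(k+1))))

lemma lt_aux {k : ℕ} (x : ZMod (2^k)) (i : Fin 2) : x.val + 2^k * i.val < 2^(k+1) := by
  have h1 : x.val < 2^k := ZMod.val_lt x
  have h2 : i.val < 2 := i.isLt
  have : 2^(k+1) = 2^k + 2^k := by rw [pow_succ]; omega
  nlinarith [(Nat.pow_pos (show 0 < 2 by norm_num) : 0 < 2^k)]

lemma gmap_val {k : ℕ} (v : ZMod (2^k) × ZMod (2^k) × ZMod (2^k)) (e : Fin 2 × Fin 2 × Fin 2) :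
    (gmap v e).1.val = v.1.val + 2^k * e.1.val
    ∧ (gmap v e).2.1.val = v.2.1.val + 2^k * e.2.1.val
    ∧ (gmap v e).2.2.val = v.2.2.val + 2^k * e.2.2.val :=
  ⟨ZMod.val_natCast_of_lt (lt_aux v.1 e.1), ZMod.val_natCast_of_lt (lt_aux v.2.1 e.2.1),
   ZMod.val_natCast_of_lt (lt_aux v.2.2 e.2.2)⟩

lemma gmap_inj {k : ℕ} (v : ZMod (2^k) × ZMod (2^k) × ZMod (2^k)) :
    Function.Injective (gmap v) := by
  intro e e' h
  have h1 := congrArg (fun w => Prod.fst w |>.val) h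
  have h2 := congrArg (fun w => w.2.1.val) h
  have h3 := congrArg (fun w => w.2.2.val) h
  simp only [(gmap_val v e).1, (gmap_val v e).2.1, (gmap_val v e).2.2,
    (gmap_val v e').1, (gmap_val v e').2.1, (gmap_val v e').2.2] at h1 h2 h3
  have hp : 0 < 2^k := Nat.pow_pos (by norm_num)
  have e1 : e.1 = e'.1 :=
    Fin.ext (Nat.eq_of_mul_eq_mul_left hp (Nat.add_left_cancel h1))
  have e2 : e.2.1 = e'.2.1 :=
    Fin.ext (Nat.eq_of_mul_eq_mul_left hp (Nat.add_left_cancel h2))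
  have e3 : e.2.2 = e'.2.2 :=
    Fin.ext (Nat.eq_of_mul_eq_mul_left hp (Nat.add_left_cancel h3))
  exact Prod.ext e1 (Prod.ext e2 e3)

lemma gmap_red {k : ℕ} (v : ZMod (2^k) × ZMod (2^k) × ZMod (2^k)) (e : Fin 2 × Fin 2 × Fin 2) :
    red (gmap v e) = v := by
  have key : ∀ (x : ZMod (2^k)) (i : Fin 2),
      ZMod.castHom (pow_dvd_pow 2 (Nat.le_succ k)) (ZMod (2^k))
        (((x.val + 2^k * i.val : ℕ) : ZMod (2^(k+1)))) = x := by
    intro x i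
    rw [map_natCast, Nat.cast_add, Nat.cast_mul, ZMod.natCast_self, zero_mul, add_zero,
      ZMod.natCast_zmod_val]
  exact Prod.ext (key v.1 e.1) (Prod.ext (key v.2.1 e.2.1) (key v.2.2 e.2.2))

lemma gmap_surj {k : ℕ} {v : ZMod (2^k) × ZMod (2^k) × ZMod (2^k)}
    {w : ZMod (2^(k+1)) × ZMod (2^(k+1)) × ZMod (2^(k+1))} (hw : red w = v) :
    ∃ e, gmap v e = w := by
  have hp : 0 < 2^k := Nat.pow_pos (by norm_num)
  have key : ∀ (x : ZMod (2^(k+1))) (y : ZMod (2^k)),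
      (ZMod.castHom (pow_dvd_pow 2 (Nat.le_succ k)) (ZMod (2^k)) x) = y →
      ∃ i : Fin 2, ((y.val + 2^k * i.val : ℕ) : ZMod (2^(k+1))) = x := by
    intro x y hxy
    have h1 : y.val = x.val % 2^k := by rw [← hxy]; exact val_red_comp x
    have hlt : x.val / 2^k < 2 := by
      have := ZMod.val_lt x
      have h2 : (2:ℕ)^(k+1) = 2^k * 2 := by rw [pow_succ]
      exact Nat.div_lt_of_lt_mul (by omega)
    refine ⟨⟨x.val / 2^k, hlt⟩, ?_⟩
    have : y.val + 2^k * (x.val / 2^k) = x.val := by rw [h1]; exact Nat.mod_add_div _ _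
    rw [this, ZMod.natCast_zmod_val]
  obtain ⟨i1, hi1⟩ := key w.1 v.1 (congrArg Prod.fst hw)
  obtain ⟨i2, hi2⟩ := key w.2.1 v.2.1 (congrArg (fun p => p.2.1) hw)
  obtain ⟨i3, hi3⟩ := key w.2.2 v.2.2 (congrArg (fun p => p.2.2) hw)
  exact ⟨(i1, i2, i3), Prod.ext hi1 (Prod.ext hi2 hi3)⟩

end St12
namespace St12

lemma count4 : ∀ (T M1 M2 M3 : ZMod 2), (M1 ≠ 0 ∨ M2 ≠ 0 ∨ M3 ≠ 0) →
    (Finset.univ.filter (fun e : Fin 2 × Fin 2 × Fin 2 =>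
      T + M1*(e.1.val : ZMod 2) + M2*(e.2.1.val : ZMod 2) + M3*(e.2.2.val : ZMod 2)
        = 0)).card = 4 := by decide

section withH
variable {a b c d : ℤ}
  (hH1 : ∀ x y z : ℤ, (8:ℤ) ∣ Fint a b c d x y z →
      (2:ℤ) ∣ (2*a*x - d*y*z) ∧ (2:ℤ) ∣ (2*b*y - d*x*z) ∧ (2:ℤ) ∣ (2*c*z - d*x*y))
  (hH2 : ∀ x y z : ℤ, (16:ℤ) ∣ Fint a b c d x y z →
      ¬((4:ℤ) ∣ (2*a*x - d*y*z) ∧ (4:ℤ) ∣ (2*b*y - d*x*z) ∧ (4:ℤ) ∣ (2*c*z - d*x*y)))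

include hH1

lemma card_sols_fiber {k : ℕ} (hk : 3 ≤ k) {v : ZMod (2^k) × ZMod (2^k) × ZMod (2^k)}
    (hv : v ∈ Tset a b c d k) :
    ((solsMod a b c d (k+1)).toFinset.filter (fun w => red w = v)).card = 8 := by
  have : ((solsMod a b c d (k+1)).toFinset.filter (fun w => red w = v)).card
      = (Finset.univ : Finset (Fin 2 × Fin 2 × Fin 2)).card := by
    refine (Finset.card_bij (fun e _ => gmap v e) ?_ ?_ ?_).symm
    · intro e _
      rw [Finset.mem_filter, Set.mem_toFinset]
      exact ⟨fiber_mem_sols hH1 hk hv (gmap_red v e), gmap_red v e⟩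
    · intro e _ e' _ h
      exact gmap_inj v h
    · intro w hw
      rw [Finset.mem_filter] at hw
      obtain ⟨e, he⟩ := gmap_surj hw.2
      exact ⟨e, Finset.mem_univ e, he⟩
  rw [this]
  decide

include hH2

lemma card_T_fiber {k : ℕ} (hk : 3 ≤ k) {v : ZMod (2^k) × ZMod (2^k) × ZMod (2^k)}
    (hv : v ∈ Tset a b c d k) :
    ((Tset a b c d (k+1)).toFinset.filter (fun w => red w = v)).card = 4 := by
  rw [mem_Tset_iff] at hv
  obtain ⟨t, ht⟩ := hv
  have h8 : (8:ℤ) ∣ Fint a b c d v.1.val v.2.1.val v.2.2.val :=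
    ⟨2^(k-2)*t, by rw [ht]; rw [show (2:ℤ)^(k+1) = 8 * 2^(k-2) by
      rw [show k+1 = 3 + (k-2) by omega, pow_add]; norm_num]; ring⟩
  have h16 : (16:ℤ) ∣ Fint a b c d v.1.val v.2.1.val v.2.2.val :=
    ⟨2^(k-3)*t, by rw [ht]; rw [show (2:ℤ)^(k+1) = 16 * 2^(k-3) by
      rw [show k+1 = 4 + (k-3) by omega, pow_add]; norm_num]; ring⟩
  obtain ⟨hd1, hd2, hd3⟩ := hH1 _ _ _ h8
  obtain ⟨m1, hm1⟩ := hd1; obtain ⟨m2, hm2⟩ := hd2; obtain ⟨m3, hm3⟩ := hd3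
  have hodd : ¬(2:ℤ) ∣ m1 ∨ ¬(2:ℤ) ∣ m2 ∨ ¬(2:ℤ) ∣ m3 := by
    by_contra hcon
    push_neg at hcon
    refine hH2 _ _ _ h16 ⟨?_, ?_, ?_⟩
    · obtain ⟨u, hu⟩ := hcon.1; exact ⟨u, by rw [hm1, hu]; ring⟩
    · obtain ⟨u, hu⟩ := hcon.2.1; exact ⟨u, by rw [hm2, hu]; ring⟩
    · obtain ⟨u, hu⟩ := hcon.2.2; exact ⟨u, by rw [hm3, hu]; ring⟩
  -- membership characterization of the fiber
  have hchar : ∀ e : Fin 2 × Fin 2 × Fin 2, (gmap v e ∈ Tset a b c d (k+1) ↔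
      ((t : ZMod 2) + (m1 : ZMod 2)*(e.1.val : ZMod 2) + (m2 : ZMod 2)*(e.2.1.val : ZMod 2)
        + (m3 : ZMod 2)*(e.2.2.val : ZMod 2) = 0)) := by
    intro e
    obtain ⟨g1, g2, g3⟩ := gmap_val v e
    obtain ⟨R, hR⟩ := key_identity (a:=a) (b:=b) (c:=c) (d:=d)
      (v.1.val : ℤ) (v.2.1.val : ℤ) (v.2.2.val : ℤ)
      (e.1.val : ℤ) (e.2.1.val : ℤ) (e.2.2.val : ℤ) m1 m2 m3 hk hm1.symm hm2.symm hm3.symm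
    have hvals : ((gmap v e).1.val : ℤ) = (v.1.val : ℤ) + 2^k * (e.1.val : ℤ)
        ∧ ((gmap v e).2.1.val : ℤ) = (v.2.1.val : ℤ) + 2^k * (e.2.1.val : ℤ)
        ∧ ((gmap v e).2.2.val : ℤ) = (v.2.2.val : ℤ) + 2^k * (e.2.2.val : ℤ) := by
      refine ⟨?_, ?_, ?_⟩
      · rw [g1]; push_cast; ring
      · rw [g2]; push_cast; ring
      · rw [g3]; push_cast; ring
    rw [mem_Tset_iff, hvals.1, hvals.2.1, hvals.2.2, hR, ht]
    have hne : (2:ℤ)^(k+1) ≠ 0 := pow_ne_zero _ (by norm_num)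
    have split : 2^(k+1)*t + 2^(k+1)*((m1*(e.1.val:ℤ) + m2*(e.2.1.val:ℤ) + m3*(e.2.2.val:ℤ)))
        + 2^(k+2)*R = 2^(k+1) * ((t + (m1*(e.1.val:ℤ) + m2*(e.2.1.val:ℤ) + m3*(e.2.2.val:ℤ)))
          + 2*R) := by ring
    rw [split, show (2:ℤ)^(k+2) = 2^(k+1)*2 by rw [pow_succ],
      mul_dvd_mul_iff_left hne]
    constructor
    · intro hdd
      have h2 : (2:ℤ) ∣ t + (m1*(e.1.val:ℤ) + m2*(e.2.1.val:ℤ) + m3*(e.2.2.val:ℤ)) := by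
        have := dvd_sub hdd (Dvd.intro R rfl)
        simpa using this
      have := (ZMod.intCast_zmod_eq_zero_iff_dvd
        (t + (m1*(e.1.val:ℤ) + m2*(e.2.1.val:ℤ) + m3*(e.2.2.val:ℤ))) 2).2 (by exact_mod_cast h2)
      push_cast at this
      linear_combination this
    · intro hz
      have h2 : (2:ℤ) ∣ t + (m1*(e.1.val:ℤ) + m2*(e.2.1.val:ℤ) + m3*(e.2.2.val:ℤ)) := by
        have : ((t + (m1*(e.1.val:ℤ) + m2*(e.2.1.val:ℤ) + m3*(e.2.2.val:ℤ)) : ℤ) : ZMod 2)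
            = 0 := by push_cast; linear_combination hz
        exact_mod_cast (ZMod.intCast_zmod_eq_zero_iff_dvd _ 2).1 this
      exact dvd_add h2 (Dvd.intro R rfl)
  have : ((Tset a b c d (k+1)).toFinset.filter (fun w => red w = v)).card
      = (Finset.univ.filter (fun e : Fin 2 × Fin 2 × Fin 2 =>
        (t : ZMod 2) + (m1 : ZMod 2)*(e.1.val : ZMod 2) + (m2 : ZMod 2)*(e.2.1.val : ZMod 2)
          + (m3 : ZMod 2)*(e.2.2.val : ZMod 2) = 0)).card := by
    refine (Finset.card_bij (fun e _ => gmap v e) ?_ ?_ ?_).symm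
    · intro e he
      rw [Finset.mem_filter] at he
      rw [Finset.mem_filter, Set.mem_toFinset]
      exact ⟨(hchar e).2 he.2, gmap_red v e⟩
    · intro e _ e' _ h
      exact gmap_inj v h
    · intro w hw
      rw [Finset.mem_filter, Set.mem_toFinset] at hw
      obtain ⟨e, he⟩ := gmap_surj hw.2
      refine ⟨e, ?_, he⟩
      rw [Finset.mem_filter]
      exact ⟨Finset.mem_univ e, (hchar e).1 (by rw [he]; exact hw.1)⟩
  rw [this]
  refine count4 _ _ _ _ ?_
  rcases hodd with h | h | h
  · exact Or.inl (fun hc => h (by exact_mod_cast (ZMod.intCast_zmod_eq_zero_iff_dvd m1 2).1 hc))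
  · exact Or.inr (Or.inl (fun hc => h (by
      exact_mod_cast (ZMod.intCast_zmod_eq_zero_iff_dvd m2 2).1 hc)))
  · exact Or.inr (Or.inr (fun hc => h (by
      exact_mod_cast (ZMod.intCast_zmod_eq_zero_iff_dvd m3 2).1 hc)))

end withH
end St12
namespace St12
section withH
variable {a b c d : ℤ}
  (hH1 : ∀ x y z : ℤ, (8:ℤ) ∣ Fint a b c d x y z →
      (2:ℤ) ∣ (2*a*x - d*y*z) ∧ (2:ℤ) ∣ (2*b*y - d*x*z) ∧ (2:ℤ) ∣ (2*c*z - d*x*y))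
  (hH2 : ∀ x y z : ℤ, (16:ℤ) ∣ Fint a b c d x y z →
      ¬((4:ℤ) ∣ (2*a*x - d*y*z) ∧ (4:ℤ) ∣ (2*b*y - d*x*z) ∧ (4:ℤ) ∣ (2*c*z - d*x*y)))

include hH1 hH2

lemma card_step {k : ℕ} (hk : 3 ≤ k) :
    (solsMod a b c d (k+1)).toFinset.card = 8 * (Tset a b c d k).toFinset.card ∧
    (Tset a b c d (k+1)).toFinset.card = 4 * (Tset a b c d k).toFinset.card := by
  constructor
  · rw [Finset.card_eq_sum_card_fiberwise (f := red) (t := (Tset a b c d k).toFinset)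
      (fun x hx => Set.mem_toFinset.2 (red_mem_Tset hH1 hk (Set.mem_toFinset.1 hx)))]
    rw [Finset.sum_congr rfl
      (fun v hv => card_sols_fiber hH1 hk (Set.mem_toFinset.1 hv))]
    rw [Finset.sum_const, smul_eq_mul, mul_comm]
  · rw [Finset.card_eq_sum_card_fiberwise (f := red) (t := (Tset a b c d k).toFinset)
      (fun x hx => Set.mem_toFinset.2 (red_mem_Tset hH1 hk
        (Tset_subset (Set.mem_toFinset.1 hx))))]
    rw [Finset.sum_congr rfl
      (fun v hv => card_T_fiber hH1 hH2 hk (Set.mem_toFinset.1 hv))]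
    rw [Finset.sum_const, smul_eq_mul, mul_comm]

lemma cards (hbase : (solsMod a b c d 3).toFinset.card = 2 * (Tset a b c d 3).toFinset.card)
    (hbne : (Tset a b c d 3).Nonempty) :
    ∀ k, 3 ≤ k → (solsMod a b c d k).toFinset.card = 2 * (Tset a b c d k).toFinset.card
      ∧ (Tset a b c d k).Nonempty := by
  intro k hk
  induction k, hk using Nat.le_induction with
  | base => exact ⟨hbase, hbne⟩
  | succ n hn ih =>
    obtain ⟨-, hne⟩ := ih
    obtain ⟨hS, hT⟩ := card_step hH1 hH2 hn
    have hpos : 0 < (Tset a b c d n).toFinset.card :=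
      Finset.card_pos.2 (Set.toFinset_nonempty.2 hne)
    refine ⟨by rw [hS, hT]; ring, ?_⟩
    rw [← Set.toFinset_nonempty, ← Finset.card_pos, hT]
    omega

end withH
end St12
namespace St12

lemma norm_int_eq_half {n : ℤ} (h2 : (2:ℤ) ∣ n) (h4 : ¬(4:ℤ) ∣ n) :
    ‖((n : ℤ) : ℤ_[2])‖ = 1/2 := by
  obtain ⟨m, rfl⟩ := h2
  have hmodd : ¬(2:ℤ) ∣ m := fun ⟨u, hu⟩ => h4 ⟨u, by rw [hu]; ring⟩
  have hm : ‖((m : ℤ) : ℤ_[2])‖ = 1 := by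
    rcases lt_or_eq_of_le (PadicInt.norm_le_one ((m : ℤ) : ℤ_[2])) with h | h
    · exact absurd ((PadicInt.norm_int_lt_one_iff_dvd m).1 h) (by exact_mod_cast hmodd)
    · exact h
  have h2n : ‖((2:ℤ) : ℤ_[2])‖ = 1/2 := by
    have := PadicInt.norm_p (p := 2)
    norm_num at this ⊢
    exact_mod_cast this
  push_cast
  rw [norm_mul]
  push_cast at h2n hm
  rw [h2n, hm, mul_one]

lemma hensel_quadratic {A B C x0 : ℤ_[2]} {k : ℕ} (hk : 3 ≤ k)
    (hF : ‖A*x0^2 + B*x0 + C‖ ≤ (2:ℝ)^(-((k:ℤ)+1)))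
    (hD : ‖2*A*x0 + B‖ = 1/2) :
    ∃ x : ℤ_[2], A*x^2 + B*x + C = 0 ∧ ‖x - x0‖ ≤ (2:ℝ)^(-(k:ℤ)) := by
  classical
  set Fp : Polynomial ℤ_[2] := Polynomial.C A * Polynomial.X^2 + Polynomial.C B * Polynomial.X
    + Polynomial.C C with hFp
  have heval : ∀ x : ℤ_[2], Fp.eval x = A*x^2 + B*x + C := by
    intro x; simp [hFp]
  have hderiv : Fp.derivative.eval x0 = 2*A*x0 + B := by
    simp [hFp]
    ring
  have hnorm : ‖Fp.eval x0‖ < ‖Fp.derivative.eval x0‖^2 := by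
    rw [heval, hderiv, hD]
    refine lt_of_le_of_lt hF ?_
    have h1 : (2:ℝ)^(-((k:ℤ)+1)) ≤ (2:ℝ)^(-(4:ℤ)) :=
      zpow_le_zpow_right₀ (by norm_num) (by omega)
    refine lt_of_le_of_lt h1 ?_
    norm_num
  obtain ⟨z, hz0, hz1, -, -⟩ := hensels_lemma hnorm
  simp only [Polynomial.coe_aeval_eq_eval] at hz0 hz1
  rw [heval] at hz0
  rw [hderiv, hD] at hz1
  refine ⟨z, hz0, ?_⟩
  have key : -(A*x0^2 + B*x0 + C) = (z - x0) * ((2*A*x0 + B) + A*(z - x0)) := by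
    linear_combination -hz0
  have hAz : ‖A*(z-x0)‖ < 1/2 := by
    rw [norm_mul]
    calc ‖A‖ * ‖z - x0‖ ≤ 1 * ‖z - x0‖ := by
          exact mul_le_mul_of_nonneg_right (PadicInt.norm_le_one A) (norm_nonneg _)
      _ = ‖z - x0‖ := one_mul _
      _ < 1/2 := hz1
  have hsum : ‖(2*A*x0 + B) + A*(z - x0)‖ = 1/2 := by
    rw [PadicInt.norm_add_eq_max_of_ne (by rw [hD]; exact ne_of_gt (by linarith)), hD]
    exact max_eq_left (le_of_lt (by linarith))
  have hprod : ‖z - x0‖ * (1/2) = ‖A*x0^2 + B*x0 + C‖ := by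
    rw [← hsum, ← norm_mul, ← key, norm_neg]
  have : ‖z - x0‖ ≤ 2 * (2:ℝ)^(-((k:ℤ)+1)) := by linarith
  refine le_trans this (le_of_eq ?_)
  rw [show -((k:ℤ)) = 1 + -((k:ℤ)+1) by ring, zpow_add₀ (by norm_num : (2:ℝ) ≠ 0)]
  norm_num

end St12
namespace St12

lemma toZModPow_eq_of_norm_le {x y : ℤ_[2]} {k : ℕ} (h : ‖x - y‖ ≤ (2:ℝ)^(-(k:ℤ))) :
    PadicInt.toZModPow k x = PadicInt.toZModPow k y := by
  have hmem : x - y ∈ Ideal.span {((2:ℤ_[2]))^k} := by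
    have := (PadicInt.norm_le_pow_iff_mem_span_pow (x - y) k).1 (by exact_mod_cast h)
    exact_mod_cast this
  have hker : x - y ∈ RingHom.ker (PadicInt.toZModPow (p := 2) k) := by
    rw [PadicInt.ker_toZModPow]
    exact_mod_cast hmem
  rw [RingHom.mem_ker, map_sub, sub_eq_zero] at hker
  exact hker

lemma norm_Fint_le {a b c d X Y Z : ℤ} {k : ℕ}
    (h : (2:ℤ)^(k+1) ∣ Fint a b c d X Y Z) :
    ‖((Fint a b c d X Y Z : ℤ) : ℤ_[2])‖ ≤ (2:ℝ)^(-((k:ℤ)+1)) := by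
  have := (PadicInt.norm_int_le_pow_iff_dvd (p := 2) (k := Fint a b c d X Y Z)
    (n := k+1)).2 (by exact_mod_cast h)
  calc ‖((Fint a b c d X Y Z : ℤ) : ℤ_[2])‖ ≤ ((2:ℕ):ℝ)^(-((k+1:ℕ)):ℤ) := this
    _ = (2:ℝ)^(-((k:ℤ)+1)) := by push_cast; norm_num

section withH
variable {a b c d : ℤ}
  (hH1 : ∀ x y z : ℤ, (8:ℤ) ∣ Fint a b c d x y z →
      (2:ℤ) ∣ (2*a*x - d*y*z) ∧ (2:ℤ) ∣ (2*b*y - d*x*z) ∧ (2:ℤ) ∣ (2*c*z - d*x*y))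
  (hH2 : ∀ x y z : ℤ, (16:ℤ) ∣ Fint a b c d x y z →
      ¬((4:ℤ) ∣ (2*a*x - d*y*z) ∧ (4:ℤ) ∣ (2*b*y - d*x*z) ∧ (4:ℤ) ∣ (2*c*z - d*x*y)))

include hH1 hH2

lemma sol_padic {k : ℕ} (hk : 3 ≤ k) (X Y Z : ℤ)
    (hdvd : (2:ℤ)^(k+1) ∣ Fint a b c d X Y Z) :
    ∃ w : ℤ_[2] × ℤ_[2] × ℤ_[2],
      (a : ℤ_[2]) * w.1 ^ 2 + (b : ℤ_[2]) * w.2.1 ^ 2 + (c : ℤ_[2]) * w.2.2 ^ 2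
        - (d : ℤ_[2]) * w.1 * w.2.1 * w.2.2 - 1 = 0 ∧
      PadicInt.toZModPow k w.1 = (X : ZMod (2^k)) ∧
      PadicInt.toZModPow k w.2.1 = (Y : ZMod (2^k)) ∧
      PadicInt.toZModPow k w.2.2 = (Z : ZMod (2^k)) := by
  have h8 : (8:ℤ) ∣ Fint a b c d X Y Z :=
    dvd_trans (by rw [show ((8:ℤ) = 2^3) by norm_num]; exact pow_dvd_pow 2 (by omega)) hdvd
  have h16 : (16:ℤ) ∣ Fint a b c d X Y Z :=
    dvd_trans (by rw [show ((16:ℤ) = 2^4) by norm_num]; exact pow_dvd_pow 2 (by omega)) hdvd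
  obtain ⟨hd1, hd2, hd3⟩ := hH1 _ _ _ h8
  have hodd := hH2 _ _ _ h16
  have hnorm := norm_Fint_le (a:=a) (b:=b) (c:=c) (d:=d) (X:=X) (Y:=Y) (Z:=Z) (k:=k) hdvd
  have hmap : ∀ W : ℤ, PadicInt.toZModPow k ((W : ℤ) : ℤ_[2]) = (W : ZMod (2^k)) := by
    intro W; rw [map_intCast]
  by_cases hc1 : (4:ℤ) ∣ (2*a*X - d*Y*Z)
  swap
  · have hFx : ‖(a : ℤ_[2])*(X:ℤ_[2])^2 + -((d:ℤ_[2])*Y*Z)*(X:ℤ_[2])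
        + ((b:ℤ_[2])*Y^2 + (c:ℤ_[2])*Z^2 - 1)‖ ≤ (2:ℝ)^(-((k:ℤ)+1)) := by
      have he : (a : ℤ_[2])*(X:ℤ_[2])^2 + -((d:ℤ_[2])*Y*Z)*(X:ℤ_[2])
          + ((b:ℤ_[2])*Y^2 + (c:ℤ_[2])*Z^2 - 1) = ((Fint a b c d X Y Z : ℤ) : ℤ_[2]) := by
        unfold Fint; push_cast; ring
      rw [he]; exact hnorm
    have hDx : ‖2*(a : ℤ_[2])*(X:ℤ_[2]) + -((d:ℤ_[2])*Y*Z)‖ = 1/2 := by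
      have he : 2*(a : ℤ_[2])*(X:ℤ_[2]) + -((d:ℤ_[2])*Y*Z)
          = ((2*a*X - d*Y*Z : ℤ) : ℤ_[2]) := by push_cast; ring
      rw [he]; exact norm_int_eq_half hd1 hc1
    obtain ⟨x, hx0, hx1⟩ := hensel_quadratic hk hFx hDx
    refine ⟨⟨x, (Y:ℤ_[2]), (Z:ℤ_[2])⟩, by linear_combination hx0, ?_, hmap Y, hmap Z⟩
    rw [← hmap X]
    exact toZModPow_eq_of_norm_le hx1
  by_cases hc2 : (4:ℤ) ∣ (2*b*Y - d*X*Z)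
  swap
  · have hFy : ‖(b : ℤ_[2])*(Y:ℤ_[2])^2 + -((d:ℤ_[2])*X*Z)*(Y:ℤ_[2])
        + ((a:ℤ_[2])*X^2 + (c:ℤ_[2])*Z^2 - 1)‖ ≤ (2:ℝ)^(-((k:ℤ)+1)) := by
      have he : (b : ℤ_[2])*(Y:ℤ_[2])^2 + -((d:ℤ_[2])*X*Z)*(Y:ℤ_[2])
          + ((a:ℤ_[2])*X^2 + (c:ℤ_[2])*Z^2 - 1) = ((Fint a b c d X Y Z : ℤ) : ℤ_[2]) := by
        unfold Fint; push_cast; ring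
      rw [he]; exact hnorm
    have hDy : ‖2*(b : ℤ_[2])*(Y:ℤ_[2]) + -((d:ℤ_[2])*X*Z)‖ = 1/2 := by
      have he : 2*(b : ℤ_[2])*(Y:ℤ_[2]) + -((d:ℤ_[2])*X*Z)
          = ((2*b*Y - d*X*Z : ℤ) : ℤ_[2]) := by push_cast; ring
      rw [he]; exact norm_int_eq_half hd2 hc2
    obtain ⟨y, hy0, hy1⟩ := hensel_quadratic hk hFy hDy
    refine ⟨⟨(X:ℤ_[2]), y, (Z:ℤ_[2])⟩, by linear_combination hy0, hmap X, ?_, hmap Z⟩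
    rw [← hmap Y]
    exact toZModPow_eq_of_norm_le hy1
  have hc3 : ¬(4:ℤ) ∣ (2*c*Z - d*X*Y) := fun hc => hodd ⟨hc1, hc2, hc⟩
  have hFz : ‖(c : ℤ_[2])*(Z:ℤ_[2])^2 + -((d:ℤ_[2])*X*Y)*(Z:ℤ_[2])
      + ((a:ℤ_[2])*X^2 + (b:ℤ_[2])*Y^2 - 1)‖ ≤ (2:ℝ)^(-((k:ℤ)+1)) := by
    have he : (c : ℤ_[2])*(Z:ℤ_[2])^2 + -((d:ℤ_[2])*X*Y)*(Z:ℤ_[2])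
        + ((a:ℤ_[2])*X^2 + (b:ℤ_[2])*Y^2 - 1) = ((Fint a b c d X Y Z : ℤ) : ℤ_[2]) := by
      unfold Fint; push_cast; ring
    rw [he]; exact hnorm
  have hDz : ‖2*(c : ℤ_[2])*(Z:ℤ_[2]) + -((d:ℤ_[2])*X*Y)‖ = 1/2 := by
    have he : 2*(c : ℤ_[2])*(Z:ℤ_[2]) + -((d:ℤ_[2])*X*Y)
        = ((2*c*Z - d*X*Y : ℤ) : ℤ_[2]) := by push_cast; ring
    rw [he]; exact norm_int_eq_half hd3 hc3
  obtain ⟨z, hz0, hz1⟩ := hensel_quadratic hk hFz hDz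
  refine ⟨⟨(X:ℤ_[2]), (Y:ℤ_[2]), z⟩, by linear_combination hz0, hmap X, hmap Y, ?_⟩
  rw [← hmap Z]
  exact toZModPow_eq_of_norm_le hz1

end withH
end St12
namespace St12
section withH
variable {a b c d : ℤ}
  (hH1 : ∀ x y z : ℤ, (8:ℤ) ∣ Fint a b c d x y z →
      (2:ℤ) ∣ (2*a*x - d*y*z) ∧ (2:ℤ) ∣ (2*b*y - d*x*z) ∧ (2:ℤ) ∣ (2*c*z - d*x*y))
  (hH2 : ∀ x y z : ℤ, (16:ℤ) ∣ Fint a b c d x y z →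
      ¬((4:ℤ) ∣ (2*a*x - d*y*z) ∧ (4:ℤ) ∣ (2*b*y - d*x*z) ∧ (4:ℤ) ∣ (2*c*z - d*x*y)))

include hH1 hH2

lemma image_eq {k : ℕ} (hk : 3 ≤ k) : solsImage a b c d k = Tset a b c d k := by
  apply Set.eq_of_subset_of_subset
  · rintro v ⟨w, hw, h1, h2, h3⟩
    have hw' : (PadicInt.toZModPow (k+1) w.1, PadicInt.toZModPow (k+1) w.2.1,
        PadicInt.toZModPow (k+1) w.2.2) ∈ solsMod a b c d (k+1) := by
      have := congrArg (PadicInt.toZModPow (k+1)) hw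
      simp only [map_add, map_sub, map_mul, map_pow, map_one, map_intCast, map_zero] at this
      exact this
    have hred := red_mem_Tset hH1 hk hw'
    have hredeq : red (PadicInt.toZModPow (k+1) w.1, PadicInt.toZModPow (k+1) w.2.1,
        PadicInt.toZModPow (k+1) w.2.2) = v := by
      refine Prod.ext ?_ (Prod.ext ?_ ?_)
      · show ZMod.castHom _ _ (PadicInt.toZModPow (k+1) w.1) = v.1
        rw [ZMod.castHom_apply, PadicInt.cast_toZModPow k (k+1) (Nat.le_succ k), h1]
      · show ZMod.castHom _ _ (PadicInt.toZModPow (k+1) w.2.1) = v.2.1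
        rw [ZMod.castHom_apply, PadicInt.cast_toZModPow k (k+1) (Nat.le_succ k), h2]
      · show ZMod.castHom _ _ (PadicInt.toZModPow (k+1) w.2.2) = v.2.2
        rw [ZMod.castHom_apply, PadicInt.cast_toZModPow k (k+1) (Nat.le_succ k), h3]
    rwa [hredeq] at hred
  · intro v hv
    rw [mem_Tset_iff] at hv
    obtain ⟨w, hw, h1, h2, h3⟩ := sol_padic hH1 hH2 hk (v.1.val : ℤ) (v.2.1.val : ℤ)
      (v.2.2.val : ℤ) hv
    have hcast : ∀ x : ZMod (2^k), (((x.val : ℕ) : ℤ) : ZMod (2^k)) = x := by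
      intro x; rw [Int.cast_natCast, ZMod.natCast_zmod_val]
    exact ⟨w, hw, by rw [h1, hcast], by rw [h2, hcast], by rw [h3, hcast]⟩

theorem general (hbase : (solsMod a b c d 3).toFinset.card = 2 * (Tset a b c d 3).toFinset.card)
    (hbne : (Tset a b c d 3).Nonempty) (k : ℕ) (hk : 3 ≤ k) :
    2 * Nat.card (solsImage a b c d k) = Nat.card (solsMod a b c d k) ∧
    solsImage a b c d k ≠ solsMod a b c d k := by
  obtain ⟨hcard, hne⟩ := cards hH1 hH2 hbase hbne k hk
  have himg := image_eq hH1 hH2 (a:=a) (b:=b) (c:=c) (d:=d) hk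
  constructor
  · rw [himg, card_glue, card_glue, hcard]
  · rw [himg]
    intro heq
    have hfin : (Tset a b c d k).toFinset = (solsMod a b c d k).toFinset := by
      ext x
      rw [Set.mem_toFinset, Set.mem_toFinset, heq]
    rw [← hfin] at hcard
    have hpos : 0 < (Tset a b c d k).toFinset.card :=
      Finset.card_pos.2 (Set.toFinset_nonempty.2 hne)
    omega

end withH
end St12
namespace St12

lemma transfer1 (a b c d : ℤ)
    (h : ∀ u v w : ZMod 8, (a:ZMod 8)*u^2 + (b:ZMod 8)*v^2 + (c:ZMod 8)*w^2
        - (d:ZMod 8)*u*v*w - 1 = 0 →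
      (ZMod.castHom (by norm_num : (2:ℕ) ∣ 8) (ZMod 2) (2*(a:ZMod 8)*u - (d:ZMod 8)*v*w) = 0 ∧
       ZMod.castHom (by norm_num : (2:ℕ) ∣ 8) (ZMod 2) (2*(b:ZMod 8)*v - (d:ZMod 8)*u*w) = 0 ∧
       ZMod.castHom (by norm_num : (2:ℕ) ∣ 8) (ZMod 2) (2*(c:ZMod 8)*w - (d:ZMod 8)*u*v) = 0)) :
    ∀ x y z : ℤ, (8:ℤ) ∣ Fint a b c d x y z →
      (2:ℤ) ∣ (2*a*x - d*y*z) ∧ (2:ℤ) ∣ (2*b*y - d*x*z) ∧ (2:ℤ) ∣ (2*c*z - d*x*y) := by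
  intro x y z hdvd
  have h8 : ((Fint a b c d x y z : ℤ) : ZMod 8) = 0 := by
    rw [ZMod.intCast_zmod_eq_zero_iff_dvd]; exact_mod_cast hdvd
  have h0 : (a:ZMod 8)*(x:ZMod 8)^2 + (b:ZMod 8)*(y:ZMod 8)^2 + (c:ZMod 8)*(z:ZMod 8)^2
      - (d:ZMod 8)*(x:ZMod 8)*(y:ZMod 8)*(z:ZMod 8) - 1 = 0 := by
    unfold Fint at h8; push_cast at h8; linear_combination h8
  obtain ⟨e1, e2, e3⟩ := h (x:ZMod 8) (y:ZMod 8) (z:ZMod 8) h0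
  refine ⟨?_, ?_, ?_⟩
  · rw [show (2:ℤ) = ((2:ℕ):ℤ) by norm_num, ← ZMod.intCast_zmod_eq_zero_iff_dvd]
    have hrw : 2*(a:ZMod 8)*(x:ZMod 8) - (d:ZMod 8)*(y:ZMod 8)*(z:ZMod 8)
        = ((2*a*x - d*y*z : ℤ) : ZMod 8) := by push_cast; ring
    rw [hrw, map_intCast] at e1
    exact e1
  · rw [show (2:ℤ) = ((2:ℕ):ℤ) by norm_num, ← ZMod.intCast_zmod_eq_zero_iff_dvd]
    have hrw : 2*(b:ZMod 8)*(y:ZMod 8) - (d:ZMod 8)*(x:ZMod 8)*(z:ZMod 8)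
        = ((2*b*y - d*x*z : ℤ) : ZMod 8) := by push_cast; ring
    rw [hrw, map_intCast] at e2
    exact e2
  · rw [show (2:ℤ) = ((2:ℕ):ℤ) by norm_num, ← ZMod.intCast_zmod_eq_zero_iff_dvd]
    have hrw : 2*(c:ZMod 8)*(z:ZMod 8) - (d:ZMod 8)*(x:ZMod 8)*(y:ZMod 8)
        = ((2*c*z - d*x*y : ℤ) : ZMod 8) := by push_cast; ring
    rw [hrw, map_intCast] at e3
    exact e3

lemma transfer2 (a b c d : ℤ)
    (h : ∀ u v w : ZMod 16, (a:ZMod 16)*u^2 + (b:ZMod 16)*v^2 + (c:ZMod 16)*w^2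
        - (d:ZMod 16)*u*v*w - 1 = 0 →
      ¬(ZMod.castHom (by norm_num : (4:ℕ) ∣ 16) (ZMod 4) (2*(a:ZMod 16)*u - (d:ZMod 16)*v*w) = 0 ∧
        ZMod.castHom (by norm_num : (4:ℕ) ∣ 16) (ZMod 4) (2*(b:ZMod 16)*v - (d:ZMod 16)*u*w) = 0 ∧
        ZMod.castHom (by norm_num : (4:ℕ) ∣ 16) (ZMod 4) (2*(c:ZMod 16)*w - (d:ZMod 16)*u*v) = 0)) :
    ∀ x y z : ℤ, (16:ℤ) ∣ Fint a b c d x y z →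
      ¬((4:ℤ) ∣ (2*a*x - d*y*z) ∧ (4:ℤ) ∣ (2*b*y - d*x*z) ∧ (4:ℤ) ∣ (2*c*z - d*x*y)) := by
  intro x y z hdvd hcon
  have h16 : ((Fint a b c d x y z : ℤ) : ZMod 16) = 0 := by
    rw [ZMod.intCast_zmod_eq_zero_iff_dvd]; exact_mod_cast hdvd
  have h0 : (a:ZMod 16)*(x:ZMod 16)^2 + (b:ZMod 16)*(y:ZMod 16)^2 + (c:ZMod 16)*(z:ZMod 16)^2
      - (d:ZMod 16)*(x:ZMod 16)*(y:ZMod 16)*(z:ZMod 16) - 1 = 0 := by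
    unfold Fint at h16; push_cast at h16; linear_combination h16
  refine h (x:ZMod 16) (y:ZMod 16) (z:ZMod 16) h0 ⟨?_, ?_, ?_⟩
  · have hrw : 2*(a:ZMod 16)*(x:ZMod 16) - (d:ZMod 16)*(y:ZMod 16)*(z:ZMod 16)
        = ((2*a*x - d*y*z : ℤ) : ZMod 16) := by push_cast; ring
    rw [hrw, map_intCast, ZMod.intCast_zmod_eq_zero_iff_dvd]
    exact_mod_cast hcon.1
  · have hrw : 2*(b:ZMod 16)*(y:ZMod 16) - (d:ZMod 16)*(x:ZMod 16)*(z:ZMod 16)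
        = ((2*b*y - d*x*z : ℤ) : ZMod 16) := by push_cast; ring
    rw [hrw, map_intCast, ZMod.intCast_zmod_eq_zero_iff_dvd]
    exact_mod_cast hcon.2.1
  · have hrw : 2*(c:ZMod 16)*(z:ZMod 16) - (d:ZMod 16)*(x:ZMod 16)*(y:ZMod 16)
        = ((2*c*z - d*x*y : ℤ) : ZMod 16) := by push_cast; ring
    rw [hrw, map_intCast, ZMod.intCast_zmod_eq_zero_iff_dvd]
    exact_mod_cast hcon.2.2

end St12


set_option maxHeartbeats 2000000 in
theorem statement12 (a b c d : ℤ)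
    (habcd : (a, b, c, d) = (1, 5, 5, 5) ∨ (a, b, c, d) = (1, 3, 6, 6) ∨
      (a, b, c, d) = (2, 7, 14, 14) ∨ (a, b, c, d) = (2, 2, 3, 6) ∨
      (a, b, c, d) = (6, 10, 15, 30) ∨ (a, b, c, d) = (1, 2, 2, 2))
    (k : ℕ) (hk : 3 ≤ k) :
    2 * Nat.card (solsImage a b c d k) = Nat.card (solsMod a b c d k) ∧
    solsImage a b c d k ≠ solsMod a b c d k := by
  rcases habcd with h | h | h | h | h | h <;>
    (simp only [Prod.mk.injEq] at h
     obtain ⟨ha, hb, hc, hd⟩ := h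
     subst ha; subst hb; subst hc; subst hd)
  · exact St12.general (St12.transfer1 1 5 5 5 (by decide)) (St12.transfer2 1 5 5 5 (by decide))
      (by decide) ⟨(0, 2, 3), by decide⟩ k hk
  · exact St12.general (St12.transfer1 1 3 6 6 (by decide)) (St12.transfer2 1 3 6 6 (by decide))
      (by decide) ⟨(0, 3, 1), by decide⟩ k hk
  · exact St12.general (St12.transfer1 2 7 14 14 (by decide)) (St12.transfer2 2 7 14 14 (by decide))
      (by decide) ⟨(1, 1, 4), by decide⟩ k hk
  · exact St12.general (St12.transfer1 2 2 3 6 (by decide)) (St12.transfer2 2 2 3 6 (by decide))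
      (by decide) ⟨(1, 1, 1), by decide⟩ k hk
  · exact St12.general (St12.transfer1 6 10 15 30 (by decide)) (St12.transfer2 6 10 15 30 (by decide))
      (by decide) ⟨(0, 1, 3), by decide⟩ k hk
  · exact St12.general (St12.transfer1 1 2 2 2 (by decide)) (St12.transfer2 1 2 2 2 (by decide))
      (by decide) ⟨(1, 0, 0), by decide⟩ k hk
end

section
/- Let k > 1 be a square-free integer. If x(t), y(t), z(t) ∈ ℤ[t] satisfy the polynomial identity (x(t)² − k·y(t)²)·z(t) = y(t) − 1 in ℤ[t], then either x, y and z are all constant polynomials, or y(t) = 1 and z(t) = 0 identically. In other words, the only 𝔸¹-curve over ℤ contained in the affine cubic surface (x² − k y²) z = y − 1 is the line z = y − 1 = 0. -/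
open Polynomial

lemma key_int (k : ℤ) (hk : 1 < k) (hsf : Squarefree k) (a b : ℤ)
    (h : a ^ 2 - k * b ^ 2 = 0) : a = 0 ∧ b = 0 := by
  have h' : a ^ 2 = k * b ^ 2 := by linarith
  by_cases hb : b = 0
  · subst hb
    simp only [mul_zero, zero_pow two_ne_zero, mul_zero] at h'
    constructor
    · nlinarith
    · rfl
  · exfalso
    have hdvd : b ^ 2 ∣ a ^ 2 := ⟨k, by linarith⟩
    have hba : b ∣ a := (Int.pow_dvd_pow_iff (by norm_num)).mp hdvd
    obtain ⟨c, rfl⟩ := hba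
    have hb2 : (b : ℤ) ^ 2 ≠ 0 := pow_ne_zero _ hb
    have hc : c ^ 2 = k := by
      have h2 : b ^ 2 * c ^ 2 = b ^ 2 * k := by ring_nf; nlinarith [h']
      exact mul_left_cancel₀ hb2 h2
    have hu : IsUnit c := hsf c (by rw [← sq]; exact hc ▸ dvd_rfl)
    rcases Int.isUnit_iff.mp hu with rfl | rfl <;> simp at hc <;> omega

lemma coeff_sq (x : Polynomial ℤ) (d : ℕ) (hd : x.natDegree ≤ d) :
    (x ^ 2).coeff (2 * d) = (x.coeff d) ^ 2 := by
  rcases eq_or_lt_of_le hd with heq | hlt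
  · rw [sq, sq, ← heq, two_mul]
    exact coeff_mul_degree_add_degree x x
  · rw [coeff_eq_zero_of_natDegree_lt hlt,
      coeff_eq_zero_of_natDegree_lt (by
        rw [natDegree_pow]; omega : (x ^ 2).natDegree < 2 * d)]
    ring

lemma pkey (k : ℤ) (hk : 1 < k) (hsf : Squarefree k) (x y : Polynomial ℤ)
    (hnot : ¬(x = 0 ∧ y = 0)) :
    (x ^ 2 - C k * y ^ 2).coeff (2 * max x.natDegree y.natDegree) ≠ 0 := by
  set d := max x.natDegree y.natDegree with hdmax
  have hx : x.natDegree ≤ d := le_max_left _ _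
  have hy : y.natDegree ≤ d := le_max_right _ _
  have hcoef : (x ^ 2 - C k * y ^ 2).coeff (2 * d)
      = (x.coeff d) ^ 2 - k * (y.coeff d) ^ 2 := by
    rw [coeff_sub, coeff_C_mul, coeff_sq x d hx, coeff_sq y d hy]
  rw [hcoef]
  intro h0
  obtain ⟨hcx, hcy⟩ := key_int k hk hsf _ _ h0
  -- derive x = 0 ∧ y = 0
  apply hnot
  by_cases hy0 : y = 0
  · subst hy0
    have hdx : d = x.natDegree := by simp [hdmax]
    have hx0 : x = 0 := by
      by_contra hx0
      exact (leadingCoeff_ne_zero.mpr hx0) (by rwa [leadingCoeff, ← hdx])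
    exact ⟨hx0, rfl⟩
  · rcases le_total y.natDegree x.natDegree with hle | hle
    · -- d = x.natDegree; show x = 0, but then d = 0 ≥ dy, y.coeff 0 = 0 → y = 0
      have hdx : d = x.natDegree := max_eq_left hle
      have hx0 : x = 0 := by
        by_contra hx0
        exact (leadingCoeff_ne_zero.mpr hx0) (by rwa [leadingCoeff, ← hdx])
      exfalso
      have hd0 : d = 0 := by rw [hdx, hx0]; simp
      have : y.natDegree = 0 := by omega
      exact hy0 (Polynomial.ext fun n => by
        rcases Nat.eq_zero_or_pos n with rfl | hn
        · simpa [hd0] using hcy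
        · exact coeff_eq_zero_of_natDegree_lt (by omega))
    · have hdy : d = y.natDegree := max_eq_right hle
      exact absurd (by rwa [leadingCoeff, ← hdy]) (leadingCoeff_ne_zero.mpr hy0)

theorem statement15 (k : ℤ) (hk : 1 < k) (hsf : Squarefree k)
    (x y z : Polynomial ℤ)
    (h : (x ^ 2 - Polynomial.C k * y ^ 2) * z = y - 1) :
    (x.natDegree = 0 ∧ y.natDegree = 0 ∧ z.natDegree = 0) ∨ (y = 1 ∧ z = 0) := by
  set p := x ^ 2 - Polynomial.C k * y ^ 2 with hp
  by_cases hy1 : y = 1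
  · -- y = 1 : show z = 0
    subst hy1
    have hnot : ¬(x = 0 ∧ (1 : Polynomial ℤ) = 0) := by
      rintro ⟨-, h1⟩; exact one_ne_zero h1
    have hcoef := pkey k hk hsf x 1 hnot
    have hpne : p ≠ 0 := by
      intro h0
      rw [← hp, h0] at hcoef
      simp at hcoef
    have hz : z = 0 := by
      have h0 : p * z = 0 := by rw [h]; ring
      rcases mul_eq_zero.mp h0 with h1 | h1
      · exact absurd h1 hpne
      · exact h1
    exact Or.inr ⟨rfl, hz⟩
  · -- y ≠ 1 : degree argument
    left
    have hsub : y - 1 ≠ 0 := sub_ne_zero.mpr hy1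
    have hpne : p ≠ 0 := by
      intro h0; rw [h0, zero_mul] at h; exact hsub h.symm
    have hzne : z ≠ 0 := by
      intro h0; rw [h0, mul_zero] at h; exact hsub h.symm
    have hnot : ¬(x = 0 ∧ y = 0) := by
      rintro ⟨rfl, rfl⟩
      apply hpne
      rw [hp]; ring
    have hcoef := pkey k hk hsf x y hnot
    rw [← hp] at hcoef
    have hD : 2 * max x.natDegree y.natDegree ≤ p.natDegree :=
      le_natDegree_of_ne_zero hcoef
    have hmul : p.natDegree + z.natDegree = (y - 1).natDegree := by
      rw [← natDegree_mul hpne hzne, h]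
    have hy1deg : (y - 1).natDegree ≤ max y.natDegree (1 : Polynomial ℤ).natDegree :=
      natDegree_sub_le y 1
    have h1d : (1 : Polynomial ℤ).natDegree = 0 := natDegree_one
    have hxle : x.natDegree ≤ max x.natDegree y.natDegree := le_max_left _ _
    have hyle : y.natDegree ≤ max x.natDegree y.natDegree := le_max_right _ _
    omega
end
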